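/- arXiv:2212.14666 — 4 statements merged into one kernel-verified Lean document; each statement's English description precedes it below -/
import Mathlib

section
/- For all integers n, j ≥ 0 and k ≥ 1, the numbers t(n,k,r) and T(n,k,r) are inverse to each other in the first sense: ∑_{i≥0} t(n,k,i)·T(i,k,j) = δ_{nj}, where δ_{nj} is the Kronecker delta. -/
open Finset

/-- Stirling numbers of the second kind: the number of partitions (equivalence
relations) of an `n`-element set into `r` nonempty blocks. -/
noncomputable def stirS2 (n r : ℕ) : ℕ :=
  Nat.card {p : Setoid (Fin n) // Nat.card (Quotient p) = r}

/-- Signed Stirling numbers of the first kind, defined by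
`x(x-1)⋯(x-n+1) = ∑_{r=0}^{n} s(n,r) xʳ`. -/
noncomputable def stirS1 (n r : ℕ) : ℤ :=
  (∏ i ∈ Finset.range n, (Polynomial.X - Polynomial.C (i : ℤ))).coeff r

/-- `Tnum n k r = T(n,k,r) = ∑_{n ≥ i_1 ≥ … ≥ i_{k-1} ≥ r} ∏_{j=1}^{k} S(i_{j-1}, i_j)`
(with `i_0 = n`, `i_k = r`), written via the equivalent recursion on `k`. -/
noncomputable def Tnum : ℕ → ℕ → ℕ → ℕ
  | n, 0, r => if n = r then 1 else 0
  | n, k + 1, r => ∑ m ∈ Finset.Icc r n, stirS2 n m * Tnum m k r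

/-- `tnum n k r = t(n,k,r) = ∑_{n ≥ i_1 ≥ … ≥ i_{k-1} ≥ r} ∏_{j=1}^{k} s(i_{j-1}, i_j)`
(with `i_0 = n`, `i_k = r`), written via the equivalent recursion on `k`. -/
noncomputable def tnum : ℕ → ℕ → ℕ → ℤ
  | n, 0, r => if n = r then 1 else 0
  | n, k + 1, r => ∑ m ∈ Finset.Icc r n, stirS1 n m * tnum m k r

/-!
Counting maps `Fin n → Fin x` according to their kernel gives
`xⁿ = ∑ᵣ S(n,r) x(x-1)⋯(x-r+1)`, an identity of polynomials since it holds for every natural `x`;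
comparing coefficients shows that the lower triangular matrices `(S(a,b))` and `(s(a,b))`,
truncated to indices `≤ N`, are inverse to each other. The recursions defining `T` and `t` say
that their truncations are the `k`-th powers of these matrices, hence they are inverse too.
-/

instance Setoid.instFinite {α : Type*} [Finite α] : Finite (Setoid α) :=
  Finite.of_injective (fun (s : Setoid α) (a b : α) => s a b) fun _ _ h =>
    Setoid.ext fun a b => iff_of_eq (congrFun (congrFun h a) b)

def Setoid.kerEqEquivEmbedding {α β : Type*} (p : Setoid α) :
    {f : α → β // Setoid.ker f = p} ≃ (Quotient p ↪ β) where
  toFun f := ⟨Quotient.lift f.1 f.2.ge, (Setoid.lift_injective_iff_ker_eq_of_le _).2 f.2⟩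
  invFun g := ⟨g ∘ Quotient.mk p, by
    ext a b
    exact g.injective.eq_iff.trans Quotient.eq⟩
  left_inv _ := rfl
  right_inv g := by ext ⟨a⟩; rfl

theorem Setoid.card_ker_eq_descFactorial {α β : Type*} [Finite α] [Finite β] (p : Setoid α) :
    Nat.card {f : α → β // Setoid.ker f = p} =
      (Nat.card β).descFactorial (Nat.card (Quotient p)) := by
  have := Fintype.ofFinite α
  have := Fintype.ofFinite β
  have := Fintype.ofFinite (Quotient p)
  rw [Nat.card_congr p.kerEqEquivEmbedding, Nat.card_eq_fintype_card, Fintype.card_embedding_eq,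
    Nat.card_eq_fintype_card, Nat.card_eq_fintype_card]

theorem Setoid.card_quotient_le {α : Type*} [Finite α] (p : Setoid α) :
    Nat.card (Quotient p) ≤ Nat.card α :=
  Nat.card_le_card_of_surjective _ Quotient.mk_surjective

theorem stirS2_eq_zero_of_lt {n r : ℕ} (h : n < r) : stirS2 n r = 0 := by
  rw [stirS2, Nat.card_eq_zero]
  refine .inl ⟨fun ⟨p, hp⟩ => ?_⟩
  simpa [hp, h.not_ge] using p.card_quotient_le

theorem pow_eq_sum_stirS2_mul_descFactorial (n x : ℕ) :
    x ^ n = ∑ r ∈ range (n + 1), stirS2 n r * x.descFactorial r := by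
  classical
  have := Fintype.ofFinite (Setoid (Fin n))
  have hker : x ^ n = ∑ p : Setoid (Fin n), Nat.card {f : Fin n → Fin x // Setoid.ker f = p} := by
    rw [← Nat.card_sigma, Nat.card_congr (Equiv.sigmaFiberEquiv _)]
    simp
  have hrank (p : Setoid (Fin n)) : Nat.card (Quotient p) ∈ range (n + 1) := by
    simpa [Nat.lt_succ_iff] using p.card_quotient_le
  simp_rw [hker, Setoid.card_ker_eq_descFactorial, Nat.card_fin]
  rw [← sum_fiberwise_of_maps_to fun p _ => hrank p]
  refine sum_congr rfl fun r _ => ?_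
  rw [sum_congr rfl fun p hp => by rw [(mem_filter.1 hp).2], sum_const, smul_eq_mul, stirS2,
    Nat.card_eq_fintype_card, Fintype.card_subtype]

section Polynomial

open Polynomial

theorem prod_range_X_sub_C_eq_descPochhammer (n : ℕ) :
    ∏ i ∈ range n, (X - C (i : ℤ)) = descPochhammer ℤ n := by
  induction n with
  | zero => simp
  | succ n ih => rw [prod_range_succ, ih, descPochhammer_succ_right, map_natCast]

theorem stirS1_eq_coeff_descPochhammer (n r : ℕ) :
    stirS1 n r = (descPochhammer ℤ n).coeff r := by
  rw [stirS1, prod_range_X_sub_C_eq_descPochhammer]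

theorem stirS1_eq_zero_of_lt {n r : ℕ} (h : n < r) : stirS1 n r = 0 := by
  rw [stirS1_eq_coeff_descPochhammer]
  exact coeff_eq_zero_of_natDegree_lt ((descPochhammer_natDegree ℤ n).trans_lt h)

theorem X_pow_eq_sum_stirS2_mul_descPochhammer (n : ℕ) :
    (X : ℤ[X]) ^ n = ∑ r ∈ range (n + 1), C (stirS2 n r : ℤ) * descPochhammer ℤ r := by
  refine eq_of_infinite_eval_eq _ _ (Set.infinite_of_injective_forall_mem Nat.cast_injective
    fun x : ℕ => ?_)
  simp only [Set.mem_ofPred_eq, eval_pow, eval_X, eval_finsetSum, eval_mul, eval_C,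
    descPochhammer_eval_eq_descFactorial]
  exact_mod_cast pow_eq_sum_stirS2_mul_descFactorial n x

theorem sum_stirS2_mul_stirS1 {n N : ℕ} (hn : n ≤ N) (j : ℕ) :
    ∑ m ∈ range (N + 1), (stirS2 n m : ℤ) * stirS1 m j = if n = j then 1 else 0 := by
  have hcoeff := congrArg (coeff · j) (X_pow_eq_sum_stirS2_mul_descPochhammer n)
  simp only [coeff_X_pow, finsetSum_coeff, coeff_C_mul, ← stirS1_eq_coeff_descPochhammer,
    @eq_comm _ j] at hcoeff
  rw [hcoeff]
  refine (sum_subset (range_subset_range.2 (by omega)) fun m hm hm' => ?_).symm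
  rw [stirS2_eq_zero_of_lt (by simp at hm hm'; omega), Nat.cast_zero, zero_mul]

end Polynomial

theorem tnum_eq_zero_of_lt {n r : ℕ} (h : n < r) (k : ℕ) : tnum n k r = 0 := by
  cases k with
  | zero => simp [tnum, h.ne]
  | succ k => rw [tnum, Icc_eq_empty_of_lt h, sum_empty]

theorem Tnum_eq_zero_of_lt {n r : ℕ} (h : n < r) (k : ℕ) : Tnum n k r = 0 := by
  cases k with
  | zero => simp [Tnum, h.ne]
  | succ k => rw [Tnum, Icc_eq_empty_of_lt h, sum_empty]

section TruncMatrix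

variable {R : Type*}

def truncMatrix (N : ℕ) (f : ℕ → ℕ → R) : Matrix (Fin (N + 1)) (Fin (N + 1)) R :=
  Matrix.of fun a b => f a b

theorem truncMatrix_mul_apply [NonUnitalNonAssocSemiring R] (N : ℕ) (f g : ℕ → ℕ → R)
    (a b : Fin (N + 1)) :
    (truncMatrix N f * truncMatrix N g) a b = ∑ m ∈ range (N + 1), f a m * g m b :=
  Fin.sum_univ_eq_sum_range (fun m => f a m * g m b) _

theorem sum_range_mul_eq_sum_Icc [NonUnitalNonAssocSemiring R] {f g : ℕ → ℕ → R}
    (hf : ∀ a m, a < m → f a m = 0) (hg : ∀ m b, m < b → g m b = 0) {a N : ℕ} (ha : a ≤ N)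
    (b : ℕ) : ∑ m ∈ range (N + 1), f a m * g m b = ∑ m ∈ Icc b a, f a m * g m b := by
  refine (sum_subset (fun m hm => by simp at hm ⊢; omega) fun m _ hm => ?_).symm
  rcases lt_or_ge a m with ham | hma
  · rw [hf a m ham, zero_mul]
  · rw [hg m b (by simp at hm; omega), mul_zero]

theorem truncMatrix_pow [Semiring R] {N : ℕ} {f : ℕ → ℕ → R} {F : ℕ → ℕ → ℕ → R}
    (hf : ∀ a m, a < m → f a m = 0) (hF : ∀ k m b, m < b → F m k b = 0)
    (hF_zero : ∀ a b, F a 0 b = if a = b then 1 else 0)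
    (hF_succ : ∀ a k b, F a (k + 1) b = ∑ m ∈ Icc b a, f a m * F m k b) (k : ℕ) :
    truncMatrix N f ^ k = truncMatrix N (fun a b => F a k b) := by
  induction k with
  | zero =>
    ext a b
    simp [truncMatrix, hF_zero, Matrix.one_apply, Fin.val_inj]
  | succ k ih =>
    ext a b
    rw [pow_succ', ih, truncMatrix_mul_apply, sum_range_mul_eq_sum_Icc hf (hF k) (by omega),
      ← hF_succ]
    rfl

end TruncMatrix

theorem truncMatrix_stirS2_mul_truncMatrix_stirS1 (N : ℕ) :
    (truncMatrix N fun a b => (stirS2 a b : ℤ)) * truncMatrix N (fun a b => stirS1 a b) = 1 := by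
  ext a b
  rw [truncMatrix_mul_apply, sum_stirS2_mul_stirS1 (Nat.le_of_lt_succ a.2), Matrix.one_apply]
  exact if_congr Fin.val_inj rfl rfl

theorem truncMatrix_stirS1_pow (N k : ℕ) :
    truncMatrix N (fun a b => stirS1 a b) ^ k = truncMatrix N fun a b => tnum a k b :=
  truncMatrix_pow (fun _ _ h => stirS1_eq_zero_of_lt h) (fun k _ _ h => tnum_eq_zero_of_lt h k)
    (fun _ _ => rfl) (fun _ _ _ => rfl) k

theorem truncMatrix_stirS2_pow (N k : ℕ) :
    (truncMatrix N fun a b => (stirS2 a b : ℤ)) ^ k =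
      truncMatrix N fun a b => (Tnum a k b : ℤ) :=
  truncMatrix_pow (F := fun a k b => (Tnum a k b : ℤ))
    (fun _ _ h => by simp [stirS2_eq_zero_of_lt h])
    (fun k _ _ h => by simp [Tnum_eq_zero_of_lt h k]) (fun _ _ => by simp [Tnum]) (fun _ _ _ => by simp [Tnum]) k

/-- The sum over `i ≥ 0` is truncated at some `N ≥ n`, as `t(n,k,i) = 0` for `i > n`. -/
theorem t_T_inverse_first_general (n j k : ℕ) (N : ℕ) (hN : n ≤ N) :
    (∑ i ∈ Finset.range (N + 1), tnum n k i * (Tnum i k j : ℤ)) =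
      if n = j then 1 else 0 := by
  rcases lt_or_ge N j with hNj | hjN
  · rw [if_neg (by omega)]
    exact sum_eq_zero fun i hi => by
      rw [Tnum_eq_zero_of_lt (by simp at hi; omega), Nat.cast_zero, mul_zero]
  set s := truncMatrix N fun a b => stirS1 a b
  set S := truncMatrix N fun a b => (stirS2 a b : ℤ)
  have hSs : S * s = 1 := truncMatrix_stirS2_mul_truncMatrix_stirS1 N
  have hsS : s * S = 1 := mul_eq_one_comm.1 hSs
  have hcomm : Commute s S := hsS.trans hSs.symm
  have hpow : s ^ k * S ^ k = 1 := by rw [← hcomm.mul_pow, hsS, one_pow]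
  have hentry := congrFun (congrFun hpow ⟨n, by omega⟩) ⟨j, by omega⟩
  rw [truncMatrix_stirS1_pow, truncMatrix_stirS2_pow, truncMatrix_mul_apply,
    Matrix.one_apply] at hentry
  exact hentry.trans (if_congr Fin.mk.inj_iff rfl rfl)

/-- The numbers `t(n,k,r)` and `T(n,k,r)` are inverse to each other:
`∑_{i ≥ 0} t(n,k,i) ⬝ T(i,k,j) = δ_{nj}`.  Since `t(n,k,i) = 0` for `i > n`,
the full sum over `i ≥ 0` is expressed as the sum over `0 ≤ i ≤ N` for any
`N ≥ n`. -/
theorem t_T_inverse_first (n j k : ℕ) (hk : 1 ≤ k) (N : ℕ) (hN : n ≤ N) :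
    (∑ i ∈ Finset.range (N + 1), tnum n k i * (Tnum i k j : ℤ)) =
      if n = j then 1 else 0 :=
  t_T_inverse_first_general n j k N hN
end

section
/- For all k ≥ 1 and all integers n ≥ r ≥ 1, the numbers T(n,k,r) satisfy the recurrence T(n,k,r) = ∑_{p=0}^{n-r} C(n-1,p) · T(p+1,k,1) · T(n-p-1,k,r-1), where C(n-1,p) is the binomial coefficient and the conventions T(0,k,0) = T(1,k,1) = 1 are used. -/
open Finset

namespace StirAux

instance setoidFinite {α : Type*} [Finite α] : Finite (Setoid α) :=
  Finite.of_injective (fun s : Setoid α => ⇑s)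
    (fun _ _ h => Setoid.eq_iff_rel_eq.2 h)

variable {n : ℕ}

/-- auxiliary map -/
def hmap (q : Setoid (Fin n)) (c : Option (Quotient q)) : Fin (n + 1) → Option (Quotient q) :=
  Fin.lastCases c (fun i => some (Quotient.mk q i))

lemma hmap_castSucc (q : Setoid (Fin n)) (c : Option (Quotient q)) (i : Fin n) :
    hmap q c i.castSucc = some (Quotient.mk q i) := Fin.lastCases_castSucc i

lemma hmap_last (q : Setoid (Fin n)) (c : Option (Quotient q)) :
    hmap q c (Fin.last n) = c := Fin.lastCases_last

/-- the master map -/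
def Psi (x : Σ q : Setoid (Fin n), Option (Quotient q)) : Setoid (Fin (n + 1)) :=
  Setoid.ker (hmap x.1 x.2)

lemma psi_eq (q : Setoid (Fin n)) (c : Option (Quotient q)) (p : Setoid (Fin (n + 1)))
    (hq : ∀ i j : Fin n, q i j ↔ p i.castSucc j.castSucc)
    (hc : ∀ i : Fin n, some (Quotient.mk q i) = c ↔ p i.castSucc (Fin.last n)) :
    Psi ⟨q, c⟩ = p := by
  ext x y
  show hmap q c x = hmap q c y ↔ p x y
  induction y using Fin.lastCases with
  | last =>
    induction x using Fin.lastCases with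
    | last => simpa using p.refl _
    | cast i => rw [hmap_last, hmap_castSucc]; exact hc i
  | cast j =>
    induction x using Fin.lastCases with
    | last =>
      rw [hmap_last, hmap_castSucc, eq_comm]
      rw [hc j]
      exact ⟨fun h => p.symm h, fun h => p.symm h⟩
    | cast i =>
      rw [hmap_castSucc, hmap_castSucc]
      simp only [Option.some.injEq]
      rw [Quotient.eq]
      exact hq i j

lemma psi_injective : Function.Injective (Psi (n := n)) := by
  rintro ⟨q, c⟩ ⟨q', c'⟩ h
  have hrel : ∀ x y, hmap q c x = hmap q c y ↔ hmap q' c' x = hmap q' c' y := by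
    intro x y
    exact Setoid.ext_iff.1 h x y
  have hq : q = q' := by
    ext i j
    have h1 := hrel i.castSucc j.castSucc
    rw [hmap_castSucc, hmap_castSucc, hmap_castSucc, hmap_castSucc] at h1
    simp only [Option.some.injEq] at h1
    rw [Quotient.eq, Quotient.eq] at h1
    exact h1
  subst hq
  have hc : c = c' := by
    rcases hcc : c with _ | d
    · rcases hcc' : c' with _ | d'
      · rfl
      · obtain ⟨i, rfl⟩ := Quotient.exists_rep d'
        have h1 := (hrel i.castSucc (Fin.last n)).2
        rw [hmap_castSucc, hmap_castSucc, hmap_last, hmap_last, hcc, hcc'] at h1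
        exact absurd (h1 rfl) (by simp)
    · obtain ⟨i, rfl⟩ := Quotient.exists_rep d
      have h1 := (hrel i.castSucc (Fin.last n)).1
      rw [hmap_castSucc, hmap_castSucc, hmap_last, hmap_last, hcc] at h1
      exact h1 rfl
  rw [hc]

lemma psi_surjective : Function.Surjective (Psi (n := n)) := by
  intro p
  set q := Setoid.comap Fin.castSucc p with hqdef
  have hq : ∀ i j : Fin n, q i j ↔ p i.castSucc j.castSucc := fun i j => Iff.rfl
  by_cases hex : ∃ i : Fin n, p i.castSucc (Fin.last n)
  · obtain ⟨i0, hi0⟩ := hex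
    refine ⟨⟨q, some (Quotient.mk q i0)⟩, psi_eq _ _ _ hq fun i => ?_⟩
    simp only [Option.some.injEq]
    rw [Quotient.eq]
    constructor
    · intro h; exact p.trans ((hq i i0).1 h) hi0
    · intro h; exact (hq i i0).2 (p.trans h (p.symm hi0))
  · refine ⟨⟨q, none⟩, psi_eq _ _ _ hq fun i => ?_⟩
    constructor
    · intro h; exact absurd h (by simp)
    · intro h; exact absurd ⟨i, h⟩ hex

lemma card_psi_none (q : Setoid (Fin n)) :
    Nat.card (Quotient (Psi ⟨q, (none : Option (Quotient q))⟩)) = Nat.card (Quotient q) + 1 := by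
  have hs : Function.Surjective (hmap q (none : Option (Quotient q))) := by
    intro c
    cases c with
    | none => exact ⟨Fin.last n, hmap_last _ _⟩
    | some d =>
      obtain ⟨i, rfl⟩ := Quotient.exists_rep d
      exact ⟨i.castSucc, hmap_castSucc _ _ _⟩
  rw [show Psi ⟨q, (none : Option (Quotient q))⟩ = Setoid.ker (hmap q none) from rfl,
    Nat.card_congr (Setoid.quotientKerEquivOfSurjective _ hs)]
  simp

lemma card_psi_some (q : Setoid (Fin n)) (d : Quotient q) :
    Nat.card (Quotient (Psi ⟨q, some d⟩)) = Nat.card (Quotient q) := by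
  set g : Fin (n + 1) → Quotient q := Fin.lastCases d (fun i => Quotient.mk q i) with hgdef
  have hg : Function.Surjective g := by
    intro e
    obtain ⟨i, rfl⟩ := Quotient.exists_rep e
    exact ⟨i.castSucc, Fin.lastCases_castSucc i⟩
  have hker : Psi ⟨q, some d⟩ = Setoid.ker g := by
    have hptw : ∀ x, hmap q (some d) x = some (g x) := by
      intro x
      induction x using Fin.lastCases with
      | last => rw [hmap_last, hgdef]; simp [Fin.lastCases_last]
      | cast i => rw [hmap_castSucc, hgdef]; simp [Fin.lastCases_castSucc]
    ext x y
    show hmap q (some d) x = hmap q (some d) y ↔ _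
    rw [hptw, hptw, Setoid.ker_def]
    simp
  rw [hker, Nat.card_congr (Setoid.quotientKerEquivOfSurjective _ hg)]

lemma stir_succ_succ (n r : ℕ) :
    stirS2 (n + 1) (r + 1) = stirS2 n r + (r + 1) * stirS2 n (r + 1) := by
  classical
  have h1 : stirS2 (n + 1) (r + 1)
      = Nat.card {x : Σ q : Setoid (Fin n), Option (Quotient q) //
          Nat.card (Quotient (Psi x)) = r + 1} := by
    rw [stirS2]
    exact (Nat.card_congr ((Equiv.ofBijective Psi ⟨psi_injective, psi_surjective⟩).subtypeEquiv
      (p := fun x => Nat.card (Quotient (Psi x)) = r + 1)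
      (q := fun p => Nat.card (Quotient p) = r + 1) (fun a => by exact Iff.rfl))).symm
  rw [h1]
  have e2 : {x : Σ q : Setoid (Fin n), Option (Quotient q) //
        Nat.card (Quotient (Psi x)) = r + 1}
      ≃ ({q : Setoid (Fin n) // Nat.card (Quotient q) = r} ⊕
         (Σ q : {q : Setoid (Fin n) // Nat.card (Quotient q) = r + 1}, Quotient q.1)) :=
    { toFun := fun x => match x with
        | ⟨⟨q, none⟩, h⟩ => Sum.inl ⟨q, by rw [card_psi_none] at h; omega⟩
        | ⟨⟨q, some d⟩, h⟩ => Sum.inr ⟨⟨q, by rwa [card_psi_some] at h⟩, d⟩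
      invFun := fun y => match y with
        | Sum.inl ⟨q, h⟩ => ⟨⟨q, none⟩, by rw [card_psi_none, h]⟩
        | Sum.inr ⟨⟨q, h⟩, d⟩ => ⟨⟨q, some d⟩, by rw [card_psi_some, h]⟩
      left_inv := by rintro ⟨⟨q, _ | d⟩, h⟩ <;> rfl
      right_inv := by rintro (⟨q, h⟩ | ⟨⟨q, h⟩, d⟩) <;> rfl }
  rw [Nat.card_congr e2, Nat.card_sum]
  have e3 : (Σ q : {q : Setoid (Fin n) // Nat.card (Quotient q) = r + 1}, Quotient q.1)
      ≃ {q : Setoid (Fin n) // Nat.card (Quotient q) = r + 1} × Fin (r + 1) :=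
    (Equiv.sigmaCongrRight (fun q => Finite.equivFinOfCardEq q.2)).trans
      (Equiv.sigmaEquivProd _ _)
  rw [Nat.card_congr e3, Nat.card_prod]
  simp [stirS2, mul_comm]

lemma stir_zero_zero : stirS2 0 0 = 1 := by
  have hsub : Subsingleton (Setoid (Fin 0)) :=
    ⟨fun a b => Setoid.ext fun x => x.elim0⟩
  have hne : Nonempty {p : Setoid (Fin 0) // Nat.card (Quotient p) = 0} := by
    refine ⟨⟨⊤, ?_⟩⟩
    have : IsEmpty (Quotient (⊤ : Setoid (Fin 0))) :=
      ⟨fun x => Quotient.ind (motive := fun _ => False) (fun i => i.elim0) x⟩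
    exact Nat.card_of_isEmpty
  have : Subsingleton {p : Setoid (Fin 0) // Nat.card (Quotient p) = 0} :=
    ⟨fun a b => Subtype.ext (hsub.allEq a.1 b.1)⟩
  rw [stirS2]
  exact Nat.card_unique

lemma stir_zero_succ (r : ℕ) : stirS2 0 (r + 1) = 0 := by
  have : IsEmpty {p : Setoid (Fin 0) // Nat.card (Quotient p) = r + 1} := by
    refine ⟨fun x => ?_⟩
    have : IsEmpty (Quotient x.1) := ⟨fun y => Quotient.ind (motive := fun _ => False) (fun i => i.elim0) y⟩
    have h0 : Nat.card (Quotient x.1) = 0 := Nat.card_of_isEmpty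
    rw [x.2] at h0
    omega
  rw [stirS2]
  exact Nat.card_of_isEmpty

lemma stir_succ_zero (n : ℕ) : stirS2 (n + 1) 0 = 0 := by
  have : IsEmpty {p : Setoid (Fin (n + 1)) // Nat.card (Quotient p) = 0} := by
    refine ⟨fun x => ?_⟩
    have hne : Nonempty (Quotient x.1) := ⟨Quotient.mk x.1 0⟩
    have := Nat.card_pos (α := Quotient x.1)
    omega
  rw [stirS2]
  exact Nat.card_of_isEmpty

lemma stir_zero_right (t : ℕ) : stirS2 t 0 = if t = 0 then 1 else 0 := by
  cases t with
  | zero => simp [stir_zero_zero]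
  | succ t => simp [stir_succ_zero]

lemma stir_vanish : ∀ n r : ℕ, n < r → stirS2 n r = 0 := by
  intro n
  induction n with
  | zero => intro r hr; cases r with
    | zero => omega
    | succ r => exact stir_zero_succ r
  | succ n ih =>
    intro r hr
    cases r with
    | zero => omega
    | succ r =>
      rw [stir_succ_succ, ih r (by omega), ih (r + 1) (by omega)]
      simp

lemma pascal_split (n : ℕ) (a : ℕ → ℕ) :
    ∑ q ∈ range (n + 1 + 1), (n + 1).choose q * a q
      = ∑ q ∈ range (n + 1), n.choose q * (a q + a (q + 1)) := by
  have h1 := Finset.sum_range_succ' (fun q => (n + 1).choose q * a q) (n + 1)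
  have h2 := Finset.sum_range_succ' (fun q => n.choose q * a q) (n + 1)
  have h3 := Finset.sum_range_succ (fun q => n.choose q * a q) (n + 1)
  rw [h1]
  have h4 : ∀ q ∈ range (n + 1), (n + 1).choose (q + 1) * a (q + 1)
      = n.choose q * a (q + 1) + n.choose (q + 1) * a (q + 1) := fun q _ => by
    rw [Nat.choose_succ_succ, add_mul]
  rw [Finset.sum_congr rfl h4, Finset.sum_add_distrib, add_assoc]
  have h5 : ∑ q ∈ range (n + 1), n.choose (q + 1) * a (q + 1) + (n + 1).choose 0 * a 0
      = ∑ q ∈ range (n + 1), n.choose q * a q := by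
    calc ∑ q ∈ range (n + 1), n.choose (q + 1) * a (q + 1) + (n + 1).choose 0 * a 0
        = ∑ q ∈ range (n + 1 + 1), n.choose q * a q := by
          rw [show (n + 1).choose 0 * a 0 = n.choose 0 * a 0 by simp]
          exact h2.symm
      _ = ∑ q ∈ range (n + 1), n.choose q * a q := by
          rw [h3, Nat.choose_succ_self]
          simp
  rw [h5, ← Finset.sum_add_distrib]
  apply Finset.sum_congr rfl
  intro q _
  ring

lemma key : ∀ n p m : ℕ, (p + m).choose p * stirS2 (n + 1) (p + m + 1)
    = ∑ q ∈ range (n + 1), n.choose q * stirS2 (q + 1) (p + 1) * stirS2 (n - q) m := by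
  intro n
  induction n with
  | zero =>
    intro p m
    rw [Finset.sum_range_one]
    cases m with
    | zero =>
      simp [stir_zero_zero, Nat.choose_self]
    | succ m' =>
      rw [stir_zero_succ, stir_vanish 1 (p + (m' + 1) + 1) (by omega)]
      ring
  | succ n ih =>
    intro p m
    cases m with
    | zero =>
      rw [Finset.sum_eq_single (n + 1)]
      · simp [stir_zero_zero, Nat.choose_self]
      · intro q hq hne
        have hq' : q ≤ n := by simp at hq; omega
        have h1 : n + 1 - q = (n - q) + 1 := by omega
        rw [h1, stir_succ_zero]
        ring
      · intro h; simp at h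
    | succ m' =>
      have hcong : ∀ q ∈ range (n + 1),
          n.choose q * (stirS2 (q + 1) (p + 1) * stirS2 (n + 1 - q) (m' + 1)
            + stirS2 (q + 1 + 1) (p + 1) * stirS2 (n + 1 - (q + 1)) (m' + 1))
          = n.choose q * stirS2 (q + 1) (p + 1) * stirS2 (n - q) m'
            + (m' + 1) * (n.choose q * stirS2 (q + 1) (p + 1) * stirS2 (n - q) (m' + 1))
            + (n.choose q * stirS2 (q + 1) p * stirS2 (n - q) (m' + 1)
            + (p + 1) * (n.choose q * stirS2 (q + 1) (p + 1) * stirS2 (n - q) (m' + 1))) := by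
        intro q hq
        have hq' : q ≤ n := by simp at hq; omega
        have h1 : n + 1 - q = (n - q) + 1 := by omega
        have h2 : n + 1 - (q + 1) = n - q := by omega
        rw [h1, h2, stir_succ_succ (n - q) m', stir_succ_succ (q + 1) p]
        ring
      have hfinal : (∑ q ∈ range (n + 1), n.choose q * stirS2 (q + 1) (p + 1) * stirS2 (n - q) m')
          + (m' + 1) * (∑ q ∈ range (n + 1), n.choose q * stirS2 (q + 1) (p + 1) * stirS2 (n - q) (m' + 1))
          + ((∑ q ∈ range (n + 1), n.choose q * stirS2 (q + 1) p * stirS2 (n - q) (m' + 1))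
          + (p + 1) * (∑ q ∈ range (n + 1), n.choose q * stirS2 (q + 1) (p + 1) * stirS2 (n - q) (m' + 1)))
          = (p + (m' + 1)).choose p * stirS2 (n + 1 + 1) (p + (m' + 1) + 1) := by
        rw [← ih p m', ← ih p (m' + 1)]
        cases p with
        | zero =>
          have hz : ∑ q ∈ range (n + 1), n.choose q * stirS2 (q + 1) 0 * stirS2 (n - q) (m' + 1) = 0 := by
            apply Finset.sum_eq_zero; intro q _; rw [stir_succ_zero]; ring
          rw [hz]
          simp only [Nat.zero_add, Nat.choose_zero_right, one_mul]
          rw [stir_succ_succ (n + 1) (m' + 1)]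
          ring
        | succ p' =>
          rw [← ih p' (m' + 1)]
          simp only [show p' + 1 + (m' + 1) = p' + m' + 1 + 1 from by omega,
            show p' + 1 + m' = p' + m' + 1 from by omega,
            show p' + (m' + 1) = p' + m' + 1 from by omega]
          rw [stir_succ_succ (n + 1) (p' + m' + 1 + 1), Nat.choose_succ_succ (p' + m' + 1) p']
          ring
      apply Eq.symm
      calc ∑ q ∈ range (n + 1 + 1), (n + 1).choose q * stirS2 (q + 1) (p + 1) * stirS2 (n + 1 - q) (m' + 1)
          = ∑ q ∈ range (n + 1 + 1), (n + 1).choose q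
              * (stirS2 (q + 1) (p + 1) * stirS2 (n + 1 - q) (m' + 1)) :=
            Finset.sum_congr rfl (fun q _ => by ring)
        _ = ∑ q ∈ range (n + 1), n.choose q * ((stirS2 (q + 1) (p + 1) * stirS2 (n + 1 - q) (m' + 1))
              + (stirS2 (q + 1 + 1) (p + 1) * stirS2 (n + 1 - (q + 1)) (m' + 1))) :=
            pascal_split n _
        _ = ∑ q ∈ range (n + 1), (n.choose q * stirS2 (q + 1) (p + 1) * stirS2 (n - q) m'
              + (m' + 1) * (n.choose q * stirS2 (q + 1) (p + 1) * stirS2 (n - q) (m' + 1))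
              + (n.choose q * stirS2 (q + 1) p * stirS2 (n - q) (m' + 1)
              + (p + 1) * (n.choose q * stirS2 (q + 1) (p + 1) * stirS2 (n - q) (m' + 1)))) :=
            Finset.sum_congr rfl hcong
        _ = (∑ q ∈ range (n + 1), n.choose q * stirS2 (q + 1) (p + 1) * stirS2 (n - q) m')
              + (m' + 1) * (∑ q ∈ range (n + 1), n.choose q * stirS2 (q + 1) (p + 1) * stirS2 (n - q) (m' + 1))
              + ((∑ q ∈ range (n + 1), n.choose q * stirS2 (q + 1) p * stirS2 (n - q) (m' + 1))
              + (p + 1) * (∑ q ∈ range (n + 1), n.choose q * stirS2 (q + 1) (p + 1) * stirS2 (n - q) (m' + 1))) := by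
            rw [Finset.sum_add_distrib, Finset.sum_add_distrib, Finset.sum_add_distrib,
              ← Finset.mul_sum, ← Finset.mul_sum]
        _ = (p + (m' + 1)).choose p * stirS2 (n + 1 + 1) (p + (m' + 1) + 1) := hfinal

lemma Tnum_zero (n r : ℕ) : Tnum n 0 r = if n = r then 1 else 0 := rfl

lemma Tnum_succ (n k r : ℕ) : Tnum n (k + 1) r = ∑ m ∈ Finset.Icc r n, stirS2 n m * Tnum m k r := rfl

lemma Tnum_vanish (k : ℕ) : ∀ n r : ℕ, n < r → Tnum n k r = 0 := by
  induction k with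
  | zero => intro n r h; rw [Tnum_zero, if_neg (by omega)]
  | succ k ih =>
    intro n r h
    rw [Tnum_succ, Finset.Icc_eq_empty (by omega), Finset.sum_empty]

lemma L1 (f : ℕ → ℕ) (n p : ℕ) (hn : 1 ≤ n) (hp : p ≤ n) :
    ∑ m ∈ range (n + 1), stirS2 n m * ((m - 1).choose p * f (m - 1 - p))
      = ∑ b ∈ range (n + 1), (p + b).choose p * stirS2 n (p + 1 + b) * f b := by
  have h1 : ∑ m ∈ Ico 0 (p + 1), stirS2 n m * ((m - 1).choose p * f (m - 1 - p)) = 0 := by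
    apply Finset.sum_eq_zero
    intro m hm
    simp only [mem_Ico] at hm
    rcases Nat.eq_zero_or_pos m with h | h
    · subst h
      rw [stir_zero_right, if_neg (by omega)]
      ring
    · rw [Nat.choose_eq_zero_of_lt (by omega : m - 1 < p)]
      ring
  have step0 : ∑ m ∈ range (n + 1), stirS2 n m * ((m - 1).choose p * f (m - 1 - p))
      = ∑ m ∈ Ico (p + 1) (n + 1), stirS2 n m * ((m - 1).choose p * f (m - 1 - p)) := by
    rw [range_eq_Ico, ← Finset.sum_Ico_consecutive _ (Nat.zero_le (p + 1))
      (by omega : p + 1 ≤ n + 1), h1, zero_add]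
  have step1 : ∑ m ∈ Ico (p + 1) (n + 1), stirS2 n m * ((m - 1).choose p * f (m - 1 - p))
      = ∑ i ∈ range (n + 1 - (p + 1)),
          stirS2 n (p + 1 + i) * ((p + 1 + i - 1).choose p * f (p + 1 + i - 1 - p)) :=
    Finset.sum_Ico_eq_sum_range _ _ _
  have step2 : ∑ i ∈ range (n + 1 - (p + 1)),
          stirS2 n (p + 1 + i) * ((p + 1 + i - 1).choose p * f (p + 1 + i - 1 - p))
      = ∑ i ∈ range (n + 1 - (p + 1)), (p + i).choose p * stirS2 n (p + 1 + i) * f i := by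
    apply Finset.sum_congr rfl
    intro i _
    rw [show p + 1 + i - 1 = p + i from by omega, show p + i - p = i from by omega]
    ring
  have step3 : ∑ i ∈ range (n + 1 - (p + 1)), (p + i).choose p * stirS2 n (p + 1 + i) * f i
      = ∑ i ∈ range (n + 1), (p + i).choose p * stirS2 n (p + 1 + i) * f i := by
    apply Finset.sum_subset (Finset.range_subset_range.2 (by omega))
    intro b hb hnb
    simp only [mem_range] at hb hnb
    rw [stir_vanish n (p + 1 + b) (by omega)]
    ring
  rw [step0, step1, step2, step3]

lemma main (k : ℕ) : ∀ n r : ℕ, 1 ≤ r → r ≤ n →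
    Tnum n k r = ∑ p ∈ range (n - r + 1),
      (n - 1).choose p * Tnum (p + 1) k 1 * Tnum (n - p - 1) k (r - 1) := by
  induction k with
  | zero =>
    intro n r hr hrn
    rw [Tnum_zero, Finset.sum_eq_single 0]
    · have h1 : (n - 0 - 1 = r - 1) = (n = r) := by
        apply propext; constructor <;> (intro; omega)
      simp only [Tnum_zero, Nat.choose_zero_right, if_pos rfl, h1, one_mul, mul_one]
      split_ifs <;> simp
    · intro p hp hne
      have : ¬(p + 1 = 1) := by omega
      simp only [Tnum_zero, if_neg this]
      ring
    · intro h
      exact absurd (Finset.mem_range.2 (by omega)) h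
  | succ k IH =>
    intro n r hr hrn
    have hn : 1 ≤ n := le_trans hr hrn
    -- per-m expansion with extended inner range
    have expand : ∀ m, r ≤ m → m ≤ n → Tnum m k r
        = ∑ p ∈ range (n + 1),
            (m - 1).choose p * (Tnum (p + 1) k 1 * Tnum (m - 1 - p) k (r - 1)) := by
      intro m hrm hmn
      have e1 : Tnum m k r = ∑ p ∈ range (m - r + 1),
          (m - 1).choose p * (Tnum (p + 1) k 1 * Tnum (m - 1 - p) k (r - 1)) := by
        rw [IH m r hr hrm]
        apply Finset.sum_congr rfl
        intro p _
        rw [show m - p - 1 = m - 1 - p from by omega, mul_assoc]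
      rw [e1]
      apply Finset.sum_subset (Finset.range_subset_range.2 (by omega))
      intro p hp hnp
      simp only [mem_range] at hp hnp
      rcases le_or_gt m p with h | h
      · rw [Nat.choose_eq_zero_of_lt (by omega : m - 1 < p)]
        ring
      · rw [Tnum_vanish k _ _ (by omega : m - 1 - p < r - 1)]
        ring
    have stepA : Tnum n (k + 1) r = ∑ m ∈ range (n + 1), stirS2 n m *
        ∑ p ∈ range (n + 1),
          (m - 1).choose p * (Tnum (p + 1) k 1 * Tnum (m - 1 - p) k (r - 1)) := by
      rw [Tnum_succ]
      refine (Finset.sum_congr rfl (fun m hm => ?_)).trans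
        (Finset.sum_subset (fun m hm => ?_) (fun m hm hnm => ?_))
      · simp only [mem_Icc] at hm
        rw [expand m hm.1 hm.2]
      · simp only [mem_Icc] at hm
        simp only [mem_range]
        omega
      · simp only [mem_range] at hm
        simp only [mem_Icc, not_and] at hnm
        have hmr : m < r := by
          by_contra hc
          exact absurd (hnm (by omega)) (by omega)
        rcases Nat.eq_zero_or_pos m with h0 | h0
        · subst h0
          rw [stir_zero_right, if_neg (by omega)]
          ring
        · have hz : ∑ p ∈ range (n + 1),
              (m - 1).choose p * (Tnum (p + 1) k 1 * Tnum (m - 1 - p) k (r - 1)) = 0 := by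
            apply Finset.sum_eq_zero
            intro p hp
            rcases le_or_gt m p with h | h
            · rw [Nat.choose_eq_zero_of_lt (by omega : m - 1 < p)]
              ring
            · rw [Tnum_vanish k _ _ (by omega : m - 1 - p < r - 1)]
              ring
          rw [hz]
          ring
    -- swap the two sums
    have stepB : ∑ m ∈ range (n + 1), stirS2 n m *
        ∑ p ∈ range (n + 1),
          (m - 1).choose p * (Tnum (p + 1) k 1 * Tnum (m - 1 - p) k (r - 1))
        = ∑ p ∈ range (n + 1), ∑ m ∈ range (n + 1),
            stirS2 n m * ((m - 1).choose p * (Tnum (p + 1) k 1 * Tnum (m - 1 - p) k (r - 1))) := by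
      simp_rw [Finset.mul_sum]
      exact Finset.sum_comm
    -- apply L1 and key pointwise
    have stepC : ∀ p ∈ range (n + 1),
        ∑ m ∈ range (n + 1),
            stirS2 n m * ((m - 1).choose p * (Tnum (p + 1) k 1 * Tnum (m - 1 - p) k (r - 1)))
        = ∑ b ∈ range (n + 1),
            (∑ q ∈ range n, (n - 1).choose q * stirS2 (q + 1) (p + 1) * stirS2 (n - 1 - q) b)
              * (Tnum (p + 1) k 1 * Tnum b k (r - 1)) := by
      intro p hp
      simp only [mem_range] at hp
      rw [L1 (fun b => Tnum (p + 1) k 1 * Tnum b k (r - 1)) n p hn (by omega)]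
      apply Finset.sum_congr rfl
      intro b _
      have hk := key (n - 1) p b
      rw [show n - 1 + 1 = n from by omega] at hk
      rw [show p + 1 + b = p + b + 1 from by omega, hk]
    -- triple sum rearrangement
    have stepD : ∑ p ∈ range (n + 1), ∑ b ∈ range (n + 1),
            (∑ q ∈ range n, (n - 1).choose q * stirS2 (q + 1) (p + 1) * stirS2 (n - 1 - q) b)
              * (Tnum (p + 1) k 1 * Tnum b k (r - 1))
        = ∑ q ∈ range n, (n - 1).choose q
            * (∑ p ∈ range (n + 1), stirS2 (q + 1) (p + 1) * Tnum (p + 1) k 1)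
            * (∑ b ∈ range (n + 1), stirS2 (n - 1 - q) b * Tnum b k (r - 1)) := by
      calc ∑ p ∈ range (n + 1), ∑ b ∈ range (n + 1),
            (∑ q ∈ range n, (n - 1).choose q * stirS2 (q + 1) (p + 1) * stirS2 (n - 1 - q) b)
              * (Tnum (p + 1) k 1 * Tnum b k (r - 1))
          = ∑ p ∈ range (n + 1), ∑ b ∈ range (n + 1), ∑ q ∈ range n,
              ((n - 1).choose q * stirS2 (q + 1) (p + 1) * stirS2 (n - 1 - q) b)
                * (Tnum (p + 1) k 1 * Tnum b k (r - 1)) :=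
            Finset.sum_congr rfl (fun p _ => Finset.sum_congr rfl
              (fun b _ => Finset.sum_mul _ _ _))
        _ = ∑ p ∈ range (n + 1), ∑ q ∈ range n, ∑ b ∈ range (n + 1),
              ((n - 1).choose q * stirS2 (q + 1) (p + 1) * stirS2 (n - 1 - q) b)
                * (Tnum (p + 1) k 1 * Tnum b k (r - 1)) :=
            Finset.sum_congr rfl (fun p _ => Finset.sum_comm)
        _ = ∑ q ∈ range n, ∑ p ∈ range (n + 1), ∑ b ∈ range (n + 1),
              ((n - 1).choose q * stirS2 (q + 1) (p + 1) * stirS2 (n - 1 - q) b)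
                * (Tnum (p + 1) k 1 * Tnum b k (r - 1)) := Finset.sum_comm
        _ = ∑ q ∈ range n, (n - 1).choose q
            * (∑ p ∈ range (n + 1), stirS2 (q + 1) (p + 1) * Tnum (p + 1) k 1)
            * (∑ b ∈ range (n + 1), stirS2 (n - 1 - q) b * Tnum b k (r - 1)) := by
            refine Finset.sum_congr rfl (fun q _ => Eq.symm ?_)
            calc (n - 1).choose q
                * (∑ p ∈ range (n + 1), stirS2 (q + 1) (p + 1) * Tnum (p + 1) k 1)
                * (∑ b ∈ range (n + 1), stirS2 (n - 1 - q) b * Tnum b k (r - 1))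
                = (∑ p ∈ range (n + 1), stirS2 (q + 1) (p + 1) * Tnum (p + 1) k 1)
                  * ((n - 1).choose q
                    * ∑ b ∈ range (n + 1), stirS2 (n - 1 - q) b * Tnum b k (r - 1)) := by ring
              _ = ∑ p ∈ range (n + 1), (stirS2 (q + 1) (p + 1) * Tnum (p + 1) k 1)
                  * ((n - 1).choose q
                    * ∑ b ∈ range (n + 1), stirS2 (n - 1 - q) b * Tnum b k (r - 1)) :=
                Finset.sum_mul _ _ _
              _ = ∑ p ∈ range (n + 1), ∑ b ∈ range (n + 1),
                    (stirS2 (q + 1) (p + 1) * Tnum (p + 1) k 1 * (n - 1).choose q)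
                      * (stirS2 (n - 1 - q) b * Tnum b k (r - 1)) := by
                refine Finset.sum_congr rfl (fun p _ => ?_)
                calc stirS2 (q + 1) (p + 1) * Tnum (p + 1) k 1
                      * ((n - 1).choose q
                        * ∑ b ∈ range (n + 1), stirS2 (n - 1 - q) b * Tnum b k (r - 1))
                    = (stirS2 (q + 1) (p + 1) * Tnum (p + 1) k 1 * (n - 1).choose q)
                      * ∑ b ∈ range (n + 1), stirS2 (n - 1 - q) b * Tnum b k (r - 1) := by ring
                  _ = ∑ b ∈ range (n + 1),
                        (stirS2 (q + 1) (p + 1) * Tnum (p + 1) k 1 * (n - 1).choose q)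
                          * (stirS2 (n - 1 - q) b * Tnum b k (r - 1)) := Finset.mul_sum _ _ _
              _ = ∑ p ∈ range (n + 1), ∑ b ∈ range (n + 1),
                    ((n - 1).choose q * stirS2 (q + 1) (p + 1) * stirS2 (n - 1 - q) b)
                      * (Tnum (p + 1) k 1 * Tnum b k (r - 1)) :=
                Finset.sum_congr rfl (fun p _ => Finset.sum_congr rfl (fun b _ => by ring))
    -- identify the inner sums with Tnum at level k+1
    have hT1 : ∀ q, q < n → Tnum (q + 1) (k + 1) 1
        = ∑ p ∈ range (n + 1), stirS2 (q + 1) (p + 1) * Tnum (p + 1) k 1 := by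
      intro q hq
      rw [Tnum_succ, ← Finset.Ico_add_one_right_eq_Icc, Finset.sum_Ico_eq_sum_range]
      refine (Finset.sum_congr (by rw [show q + 1 + 1 - 1 = q + 1 from by omega])
        (fun i _ => by rw [Nat.add_comm 1 i])).trans ?_
      apply Finset.sum_subset (Finset.range_subset_range.2 (by omega))
      intro i hi hni
      simp only [mem_range] at hi hni
      rw [stir_vanish (q + 1) (i + 1) (by omega)]
      ring
    have hT2 : ∀ M j, M ≤ n → Tnum M (k + 1) j
        = ∑ b ∈ range (n + 1), stirS2 M b * Tnum b k j := by
      intro M j hM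
      rw [Tnum_succ]
      apply Finset.sum_subset
      · intro b hb
        simp only [mem_Icc] at hb
        simp only [mem_range]
        omega
      · intro b hb hnb
        simp only [mem_range] at hb
        simp only [mem_Icc, not_and] at hnb
        rcases le_or_gt b M with h | h
        · have hbj : b < j := by
            by_contra hc
            exact absurd h (hnb (by omega))
          rw [Tnum_vanish k b j hbj]
          ring
        · rw [stir_vanish M b h]
          ring
    have hE : ∑ q ∈ range n, (n - 1).choose q
            * (∑ p ∈ range (n + 1), stirS2 (q + 1) (p + 1) * Tnum (p + 1) k 1)
            * (∑ b ∈ range (n + 1), stirS2 (n - 1 - q) b * Tnum b k (r - 1))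
        = ∑ q ∈ range n,
            (n - 1).choose q * Tnum (q + 1) (k + 1) 1 * Tnum (n - q - 1) (k + 1) (r - 1) := by
      apply Finset.sum_congr rfl
      intro q hq
      simp only [mem_range] at hq
      rw [← hT1 q hq, show n - 1 - q = n - q - 1 from by omega,
        ← hT2 (n - q - 1) (r - 1) (by omega)]
    have hF : ∑ p ∈ range (n - r + 1),
          (n - 1).choose p * Tnum (p + 1) (k + 1) 1 * Tnum (n - p - 1) (k + 1) (r - 1)
        = ∑ q ∈ range n,
            (n - 1).choose q * Tnum (q + 1) (k + 1) 1 * Tnum (n - q - 1) (k + 1) (r - 1) := by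
      apply Finset.sum_subset (Finset.range_subset_range.2 (by omega))
      intro q hq hnq
      simp only [mem_range] at hq hnq
      rw [Tnum_vanish (k + 1) (n - q - 1) (r - 1) (by omega)]
      ring
    exact stepA.trans (stepB.trans ((Finset.sum_congr rfl stepC).trans
      (stepD.trans (hE.trans hF.symm))))

end StirAux

/-- For `k ≥ 1` and `n ≥ r ≥ 1`:
`T(n,k,r) = ∑_{p=0}^{n-r} C(n-1,p) ⬝ T(p+1,k,1) ⬝ T(n-p-1,k,r-1)`
(with the conventions `T(0,k,0) = T(1,k,1) = 1`, which hold for `Tnum`). -/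
theorem T_recurrence (n k r : ℕ) (hk : 1 ≤ k) (hr : 1 ≤ r) (hrn : r ≤ n) :
    Tnum n k r = ∑ p ∈ Finset.range (n - r + 1),
      Nat.choose (n - 1) p * Tnum (p + 1) k 1 * Tnum (n - p - 1) k (r - 1) := by
  exact StirAux.main k n r hr hrn
end

section
/- For all n ≥ 1 and k ≥ 2, t(n,k,1) = ∑_{λ ⊢ n} (-1)^{l(λ)+1} g_λ ∏_{i=1}^{l(λ)} t(λ_i, k-1, 1), where the sum is over all integer partitions λ of n. -/
open Finset

/-- `f_λ = n! / (∏_j (j!)^{m_j} · m_j!)` where `m_j` is the multiplicity of the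
part `j` in the integer partition `λ` of `n`. -/
noncomputable def fPart (n : ℕ) (P : Nat.Partition n) : ℚ :=
  (n.factorial : ℚ) /
    ∏ j ∈ Finset.range (n + 1),
      ((j.factorial : ℚ) ^ (P.parts.count j) * ((P.parts.count j).factorial : ℚ))

/-- `g_λ = (l(λ) - 1)! · f_λ`. -/
noncomputable def gPart (n : ℕ) (P : Nat.Partition n) : ℚ :=
  ((Multiset.card P.parts - 1).factorial : ℚ) * fPart n P


/-!
Write `T_k = ∑ₙ t(n,k,1) xⁿ/n!`. Since `n! [xⁿ] log(1+x)^m = m! s(n,m)` (both sides obey the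
recurrence coming from `(1+x) (log(1+x)^{m+1})' = (m+1) log(1+x)^m`), the defining recursion of
`t` says `T_{k+1} = T_k ∘ log(1+x)` with `T_0 = x`. So `T_k` is the `k`-fold composite of
`log(1+x)`, and by associativity of composition `T_{k+1} = log(1+T_k) = ∑_l (-1)^{l+1} T_k^l / l`.
Finally, for an exponential generating function `U = ∑ aₙ xⁿ/n!` with `a₀ = 0`,
`n! [xⁿ] U^l = l! ∑_{λ ⊢ n, l(λ) = l} f_λ ∏ a_{λᵢ}`, by induction on `l`: removing one part `j`
from a partition multiplies `f_λ` by `m_j / binom(n, j)`.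
-/

open PowerSeries

lemma stirS1_zero_left (r : ℕ) : stirS1 0 r = if r = 0 then 1 else 0 := by
  simp [stirS1, Polynomial.coeff_one]

lemma stirS1_succ_zero (n : ℕ) : stirS1 (n + 1) 0 = 0 := by
  simp [stirS1, Polynomial.coeff_zero_eq_eval_zero, Polynomial.eval_prod,
    Finset.prod_range_succ']

lemma stirS1_succ_succ (n r : ℕ) :
    stirS1 (n + 1) (r + 1) = stirS1 n r - n * stirS1 n (r + 1) := by
  rw [stirS1, Finset.prod_range_succ, mul_sub, Polynomial.coeff_sub, Polynomial.coeff_mul_X,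
    Polynomial.coeff_mul_C, stirS1, stirS1, mul_comm]

lemma coeff_X_mul_derivative {R : Type*} [CommRing R] (f : R⟦X⟧) (n : ℕ) :
    coeff n (X * d⁄dX R f) = n * coeff n f := by
  cases n with
  | zero => simp
  | succ n => rw [coeff_succ_X_mul, coeff_derivative, Nat.cast_succ, mul_comm]

lemma one_add_X_mul_derivative_log : (1 + X) * d⁄dX ℚ (log ℚ) = 1 := by
  ext n
  rw [add_mul, one_mul, map_add, coeff_X_mul_derivative, deriv_log, coeff_mk, coeff_log,
    coeff_one]
  rcases eq_or_ne n 0 with rfl | hn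
  · simp
  · simp [hn, pow_succ]
    field_simp
    ring

lemma one_add_X_mul_derivative_log_pow (m : ℕ) :
    (1 + X) * d⁄dX ℚ (log ℚ ^ (m + 1)) = (m + 1 : ℚ) • log ℚ ^ m := by
  rw [Derivation.leibniz_pow, Nat.add_sub_cancel, smul_eq_mul, mul_smul_comm, mul_left_comm,
    one_add_X_mul_derivative_log, mul_one, ← Nat.cast_smul_eq_nsmul ℚ]
  push_cast
  rfl

lemma coeff_log_pow (n m : ℕ) :
    coeff n (log ℚ ^ m) = m.factorial * stirS1 n m / n.factorial := by
  induction m generalizing n with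
  | zero =>
    cases n with
    | zero => simp [stirS1_zero_left]
    | succ n => simp [coeff_one, stirS1_succ_zero]
  | succ m ihm =>
    induction n with
    | zero =>
      simp [stirS1_zero_left, ← coeff_zero_eq_constantCoeff_apply, map_pow]
    | succ n ihn =>
      have hode := congrArg (coeff n) (one_add_X_mul_derivative_log_pow m)
      rw [add_mul, one_mul, map_add, coeff_X_mul_derivative, coeff_derivative, map_smul,
        smul_eq_mul, ihn, ihm] at hode
      rw [Nat.factorial_succ m] at hode
      rw [stirS1_succ_succ, Nat.factorial_succ n, Nat.factorial_succ m]
      push_cast at hode ⊢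
      field_simp at hode ⊢
      linear_combination hode

lemma coeff_subst_eq_sum_range {R : Type*} [CommRing R] {f g : R⟦X⟧} (hg : constantCoeff g = 0)
    (n : ℕ) :
    coeff n (f.subst g) = ∑ d ∈ Finset.range (n + 1), coeff d f * coeff n (g ^ d) := by
  rw [coeff_subst' (HasSubst.of_constantCoeff_zero' hg)]
  refine finsum_eq_sum_of_support_subset _ fun d hd => Finset.mem_range_succ_iff.2 ?_
  by_contra! hnd
  refine hd ?_
  dsimp only
  rw [smul_eq_mul, coeff_of_lt_order n ((le_order_pow_of_constantCoeff_eq_zero d hg).trans_lt' ?_),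
    mul_zero]
  exact_mod_cast hnd

noncomputable def egf (a : ℕ → ℚ) : ℚ⟦X⟧ := mk fun n => a n / n.factorial

lemma factorial_mul_coeff_egf (a : ℕ → ℚ) (n : ℕ) : n.factorial * coeff n (egf a) = a n := by
  rw [egf, coeff_mk]
  field_simp

lemma egf_subst_log (b : ℕ → ℚ) :
    (egf b).subst (log ℚ) = egf fun n => ∑ m ∈ Finset.range (n + 1), stirS1 n m * b m := by
  ext n
  simp only [coeff_subst_eq_sum_range constantCoeff_log, egf, coeff_mk, Finset.sum_div]
  refine Finset.sum_congr rfl fun m _ => ?_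
  rw [coeff_log_pow]
  field_simp

lemma tnum_zero_left (k : ℕ) {r : ℕ} (hr : r ≠ 0) : tnum 0 k r = 0 := by
  cases k with
  | zero => simp [tnum, hr.symm]
  | succ k => simp [tnum, Finset.Icc_eq_empty_of_lt (Nat.pos_of_ne_zero hr)]

lemma tnum_succ_one (n k : ℕ) :
    tnum n (k + 1) 1 = ∑ m ∈ Finset.range (n + 1), stirS1 n m * tnum m k 1 := by
  rw [Finset.range_eq_Ico, Finset.sum_eq_sum_Ico_succ_bot (by omega : 0 < n + 1),
    tnum_zero_left k one_ne_zero, mul_zero, zero_add, zero_add, Finset.Ico_add_one_right_eq_Icc,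
    tnum]

noncomputable def tnumEgf (k : ℕ) : ℚ⟦X⟧ := egf fun n => tnum n k 1

lemma constantCoeff_tnumEgf (k : ℕ) : constantCoeff (tnumEgf k) = 0 := by
  rw [← coeff_zero_eq_constantCoeff_apply, tnumEgf, egf, coeff_mk, tnum_zero_left k one_ne_zero]
  simp

lemma tnumEgf_zero : tnumEgf 0 = X := by
  ext n
  rw [tnumEgf, egf, coeff_mk, coeff_X, tnum]
  split_ifs <;> simp_all

lemma tnumEgf_succ (k : ℕ) : tnumEgf (k + 1) = (tnumEgf k).subst (log ℚ) := by
  rw [tnumEgf, tnumEgf, egf_subst_log]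
  simp only [tnum_succ_one]
  push_cast
  rfl

lemma tnumEgf_succ_eq_log_subst (k : ℕ) : tnumEgf (k + 1) = (log ℚ).subst (tnumEgf k) := by
  induction k with
  | zero => rw [tnumEgf_succ, tnumEgf_zero, subst_X HasSubst.log, X_subst]
  | succ k ih =>
    calc tnumEgf (k + 2) = (tnumEgf (k + 1)).subst (log ℚ) := tnumEgf_succ _
      _ = subst (log ℚ) (subst (tnumEgf k) (log ℚ) : ℚ⟦X⟧) := by rw [ih]
      _ = subst (subst (log ℚ) (tnumEgf k) : ℚ⟦X⟧) (log ℚ) := by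
        rw [subst_comp_subst_apply (HasSubst.of_constantCoeff_zero' (constantCoeff_tnumEgf k))
          (HasSubst.log (A := ℚ))]
      _ = (log ℚ).subst (tnumEgf (k + 1)) := by rw [tnumEgf_succ]

noncomputable def partDenom (N : ℕ) (s : Multiset ℕ) : ℚ :=
  ∏ j ∈ Finset.range N, ((j.factorial : ℚ) ^ s.count j * ((s.count j).factorial : ℚ))

lemma fPart_eq_div_partDenom (n : ℕ) (P : n.Partition) :
    fPart n P = n.factorial / partDenom (n + 1) P.parts := rfl

lemma partDenom_ne_zero (N : ℕ) (s : Multiset ℕ) : partDenom N s ≠ 0 :=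
  Finset.prod_ne_zero_iff.2 fun _ _ => by positivity

lemma partDenom_cons {N j : ℕ} (hj : j < N) (s : Multiset ℕ) :
    partDenom N (j ::ₘ s) = j.factorial * (s.count j + 1) * partDenom N s := by
  have hfactor : ∀ i ∈ Finset.range N,
      ((i.factorial : ℚ) ^ (j ::ₘ s).count i * ((j ::ₘ s).count i).factorial) =
        (if j = i then (j.factorial : ℚ) * (s.count j + 1) else 1) *
          ((i.factorial : ℚ) ^ s.count i * (s.count i).factorial) := by
    intro i _
    by_cases h : j = i
    · subst h
      rw [if_pos rfl, Multiset.count_cons_self, pow_succ, Nat.factorial_succ]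
      push_cast
      ring
    · rw [if_neg h, one_mul, Multiset.count_cons_of_ne (Ne.symm h)]
  rw [partDenom, Finset.prod_congr rfl hfactor, Finset.prod_mul_distrib,
    Finset.prod_ite_eq (Finset.range N) j, if_pos (Finset.mem_range.2 hj), partDenom]

lemma partDenom_of_lt {N M : ℕ} {s : Multiset ℕ} (hs : ∀ x ∈ s, x < N) (hNM : N ≤ M) :
    partDenom M s = partDenom N s := by
  refine (Finset.prod_subset (Finset.range_subset_range.2 hNM) fun i _ hi => ?_).symm
  rw [Multiset.count_eq_zero.2 fun h => hi (Finset.mem_range.2 (hs i h))]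
  simp

lemma fPart_cons {n j : ℕ} (hjn : j ≤ n) (μ : (n - j).Partition) :
    n.factorial / partDenom (n + 1) (j ::ₘ μ.parts) * (μ.parts.count j + 1) =
      n.choose j * fPart (n - j) μ := by
  have hμ : ∀ x ∈ μ.parts, x < n - j + 1 := fun x hx => Nat.lt_succ_of_le (μ.le_of_mem_parts hx)
  have hfac : (n.choose j * j.factorial * (n - j).factorial : ℚ) = n.factorial := by
    exact_mod_cast Nat.choose_mul_factorial_mul_factorial hjn
  rw [partDenom_cons (by omega), partDenom_of_lt hμ (by omega), fPart_eq_div_partDenom, ← hfac]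
  have := partDenom_ne_zero (n - j + 1) μ.parts
  field_simp

lemma sum_count_mul_eq_sum_cons {n j : ℕ} (hj : 1 ≤ j) (hjn : j ≤ n) (G : Multiset ℕ → ℚ) :
    ∑ P : n.Partition, P.parts.count j * G P.parts =
      ∑ μ : (n - j).Partition, (μ.parts.count j + 1) * G (j ::ₘ μ.parts) := by
  rw [← Finset.sum_filter_of_ne (p := fun P : n.Partition => j ∈ P.parts)
      fun P _ hP => by_contra fun hjP => hP (by simp [Multiset.count_eq_zero.2 hjP]),
    Finset.sum_subtype _ fun P => Finset.mem_filter_univ P]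
  refine Fintype.sum_equiv (Nat.Partition.partitionWithPartEquiv hj hjn) _ _ fun P => ?_
  rw [Nat.Partition.partitionWithPartEquiv_apply_parts, Multiset.cons_erase P.2]
  nth_rw 1 [← Multiset.cons_erase P.2]
  rw [Multiset.count_cons_self]
  push_cast
  rfl

noncomputable def partitionSum (a : ℕ → ℚ) (n l : ℕ) : ℚ :=
  ∑ P : n.Partition with Multiset.card P.parts = l, fPart n P * (P.parts.map a).prod

lemma partitionSum_zero (a : ℕ → ℚ) {n : ℕ} (hn : n ≠ 0) : partitionSum a n 0 = 0 := by
  refine Finset.sum_eq_zero fun P hP => absurd ?_ hn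
  rw [← P.parts_sum, Multiset.card_eq_zero.1 (Finset.mem_filter.1 hP).2, Multiset.sum_zero]

lemma sum_count_mul_eq_choose_mul_partitionSum (a : ℕ → ℚ) {n j : ℕ} (hj : 1 ≤ j) (hjn : j ≤ n)
    (l : ℕ) :
    ∑ P : n.Partition with Multiset.card P.parts = l + 1,
        P.parts.count j * (fPart n P * (P.parts.map a).prod) =
      n.choose j * a j * partitionSum a (n - j) l := by
  let G : Multiset ℕ → ℚ := fun s =>
    if Multiset.card s = l + 1 then n.factorial / partDenom (n + 1) s * (s.map a).prod else 0
  calc _ = ∑ P : n.Partition, P.parts.count j * G P.parts := by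
        rw [Finset.sum_filter]
        refine Finset.sum_congr rfl fun P _ => ?_
        simp only [G, mul_ite, mul_zero, fPart_eq_div_partDenom]
    _ = ∑ μ : (n - j).Partition, (μ.parts.count j + 1) * G (j ::ₘ μ.parts) :=
        sum_count_mul_eq_sum_cons hj hjn G
    _ = _ := by
        rw [partitionSum, Finset.sum_filter, Finset.mul_sum]
        refine Finset.sum_congr rfl fun μ _ => ?_
        simp only [G, Multiset.card_cons, Nat.add_right_cancel_iff, mul_ite, mul_zero]
        split_ifs
        · rw [Multiset.map_cons, Multiset.prod_cons]
          linear_combination (a j * (μ.parts.map a).prod) * fPart_cons hjn μ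
        · rfl

lemma succ_mul_partitionSum_succ {a : ℕ → ℚ} (ha : a 0 = 0) (n l : ℕ) :
    (l + 1) * partitionSum a n (l + 1) =
      ∑ j ∈ Finset.range (n + 1), n.choose j * a j * partitionSum a (n - j) l := by
  have hcard : ∀ P : n.Partition,
      (Multiset.card P.parts : ℚ) = ∑ j ∈ Finset.range (n + 1), (P.parts.count j : ℚ) := by
    intro P
    rw [← Nat.cast_sum, Multiset.sum_count_eq_card fun i hi =>
      Finset.mem_range_succ_iff.2 (P.le_of_mem_parts hi)]
  calc _ = ∑ P : n.Partition with Multiset.card P.parts = l + 1,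
        (Multiset.card P.parts : ℚ) * (fPart n P * (P.parts.map a).prod) := by
        rw [partitionSum, Finset.mul_sum]
        refine Finset.sum_congr rfl fun P hP => ?_
        rw [(Finset.mem_filter.1 hP).2]
        push_cast
        rfl
    _ = ∑ j ∈ Finset.range (n + 1), ∑ P : n.Partition with Multiset.card P.parts = l + 1,
        P.parts.count j * (fPart n P * (P.parts.map a).prod) := by
        simp only [hcard, Finset.sum_mul]
        exact Finset.sum_comm
    _ = _ := by
        refine Finset.sum_congr rfl fun j hj => ?_
        rcases Nat.eq_zero_or_pos j with rfl | hj0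
        · simp [ha, Multiset.count_eq_zero.2 fun h => (Nat.Partition.parts_pos _ h).false]
        · exact sum_count_mul_eq_choose_mul_partitionSum a hj0
            (Finset.mem_range_succ_iff.1 hj) l

lemma factorial_mul_coeff_egf_pow {a : ℕ → ℚ} (ha : a 0 = 0) (l n : ℕ) :
    n.factorial * coeff n (egf a ^ l) = l.factorial * partitionSum a n l := by
  induction l generalizing n with
  | zero =>
    rcases Nat.eq_zero_or_pos n with rfl | hn
    · simp [partitionSum, fPart]
    · rw [pow_zero, coeff_one, if_neg hn.ne', mul_zero, partitionSum_zero a hn.ne', mul_zero]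
  | succ l ih =>
    have hterm : ∀ j ∈ Finset.range (n + 1),
        n.factorial * (coeff j (egf a) * coeff (n - j) (egf a ^ l)) =
          l.factorial * (n.choose j * a j * partitionSum a (n - j) l) := by
      intro j hj
      have hfac : (n.choose j * j.factorial * (n - j).factorial : ℚ) = n.factorial := by
        exact_mod_cast Nat.choose_mul_factorial_mul_factorial (Finset.mem_range_succ_iff.1 hj)
      linear_combination (n.choose j * (n - j).factorial * coeff (n - j) (egf a ^ l)) *
          factorial_mul_coeff_egf a j + n.choose j * a j * ih (n - j) -
        coeff j (egf a) * coeff (n - j) (egf a ^ l) * hfac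
    rw [pow_succ', coeff_mul, Finset.Nat.sum_antidiagonal_eq_sum_range_succ
      (fun i k => coeff i (egf a) * coeff k (egf a ^ l)), Finset.mul_sum,
      Finset.sum_congr rfl hterm, ← Finset.mul_sum, ← succ_mul_partitionSum_succ ha,
      Nat.factorial_succ]
    push_cast
    ring

lemma coeff_log_mul_factorial {l : ℕ} (hl : l ≠ 0) :
    coeff l (log ℚ) * l.factorial = (-1) ^ (l + 1) * (l - 1).factorial := by
  obtain ⟨l, rfl⟩ := Nat.exists_eq_succ_of_ne_zero hl
  rw [coeff_log, if_neg hl, Nat.factorial_succ, Nat.succ_sub_one]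
  push_cast
  field_simp

lemma card_parts_le {n : ℕ} (P : n.Partition) : Multiset.card P.parts ≤ n := by
  simpa [P.parts_sum] using Multiset.card_nsmul_le_sum (a := 1) fun _ hx => P.parts_pos hx

lemma sum_sign_mul_gPart_mul_prod (a : ℕ → ℚ) (n : ℕ) :
    ∑ P : n.Partition,
        (-1 : ℚ) ^ (Multiset.card P.parts + 1) * gPart n P * (P.parts.map a).prod =
      ∑ l ∈ Finset.range (n + 1), (-1) ^ (l + 1) * (l - 1).factorial * partitionSum a n l := by
  rw [← Finset.sum_fiberwise_of_maps_to (g := fun P : n.Partition => Multiset.card P.parts)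
    fun P _ => Finset.mem_range_succ_iff.2 (card_parts_le P)]
  refine Finset.sum_congr rfl fun l _ => ?_
  rw [partitionSum, Finset.mul_sum]
  refine Finset.sum_congr rfl fun P hP => ?_
  rw [gPart, (Finset.mem_filter.1 hP).2]
  ring

/-- For `n ≥ 1`, `k ≥ 2`:
`t(n,k,1) = ∑_{λ ⊢ n} (-1)^{l(λ)+1} g_λ ∏_{i=1}^{l(λ)} t(λ_i, k-1, 1)`,
the sum being over all integer partitions `λ` of `n`. -/
theorem t_one_recurrence (n k : ℕ) (hn : 1 ≤ n) (hk : 2 ≤ k) :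
    (tnum n k 1 : ℚ) =
      ∑ P : Nat.Partition n,
        (-1 : ℚ) ^ (Multiset.card P.parts + 1) * gPart n P *
          (P.parts.map fun i => (tnum i (k - 1) 1 : ℚ)).prod := by
  obtain ⟨j, rfl⟩ : ∃ j, k = j + 1 := ⟨k - 1, by omega⟩
  have ha : (tnum 0 j 1 : ℚ) = 0 := by rw [tnum_zero_left j one_ne_zero, Int.cast_zero]
  rw [Nat.add_sub_cancel, sum_sign_mul_gPart_mul_prod,
    ← factorial_mul_coeff_egf (fun i => (tnum i (j + 1) 1 : ℚ)) n, ← tnumEgf,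
    tnumEgf_succ_eq_log_subst, coeff_subst_eq_sum_range (constantCoeff_tnumEgf j), Finset.mul_sum]
  refine Finset.sum_congr rfl fun l _ => ?_
  rcases eq_or_ne l 0 with rfl | hl
  · rw [partitionSum_zero _ (by omega)]
    simp
  · rw [mul_left_comm, tnumEgf, factorial_mul_coeff_egf_pow ha, ← mul_assoc,
      coeff_log_mul_factorial hl]
end

section
/- For all n ≥ 1, r ≥ 1 and k ≥ 2, T(n,k,r) = ∑_{λ ⊢ n, l(λ)=r} f_λ ∏_{i=1}^{r} ( ∑_{r'=1}^{λ_i} T(λ_i, k-1, r') ), where the sum is over integer partitions λ of n of length r. -/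
open Finset

/-!
`T(n,k,r)` counts chains `p₁ ≤ ⋯ ≤ p_k` of set partitions of an `n`-set with `r` blocks in
`p_k`: the factor `S(i_{j-1}, i_j)` chooses how the blocks of `p_{j-1}` are merged into those
of `p_j`. Inside a block `c` of `p_k` the chain restricts to an arbitrary chain of length `k - 1`
on `c`, independently for the different blocks, so
`T(n,k,r) = ∑_{p_k} ∏_{c ∈ p_k} ∑_{r'} T(|c|, k-1, r')`; formally this is an induction on `k`
through `T(n,k+1,r) = ∑_m T(n,k,m) S(m,r)`. Grouping the partitions `p_k` by their block sizes
`λ` gives the theorem, since exactly `f_λ` set partitions have block sizes `λ`: if `N(μ)` counts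
them, removing a block of size `a` gives `N(a :: μ) · (m_a(μ) + 1) = C(n, a) · N(μ)`.
-/

namespace Setoid

open scoped Classical

variable {α β : Type*}

noncomputable instance [Finite α] : Fintype (Setoid α) :=
  haveI : Finite (Setoid α) := Finite.of_injective (fun p : Setoid α => ⇑p) fun _ _ h =>
    Setoid.ext fun x y => Iff.of_eq (congrFun (congrFun h x) y)
  Fintype.ofFinite _

theorem card_quotient_comap {f : α → β} (hf : Function.Surjective f) (r : Setoid β) :
    Nat.card (Quotient (r.comap f)) = Nat.card (Quotient r) := by
  rw [Nat.card_congr (comapQuotientEquiv f r),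
    Set.range_eq_univ.mpr (Quotient.mk''_surjective.comp hf), Nat.card_univ]

def comapEquiv (e : α ≃ β) : Setoid β ≃ Setoid α where
  toFun q := q.comap e
  invFun p := p.comap e.symm
  left_inv q := Setoid.ext fun _ _ => by simp only [comap_rel, Equiv.apply_symm_apply]
  right_inv p := Setoid.ext fun _ _ => by simp only [comap_rel, Equiv.symm_apply_apply]

noncomputable def classCard (p : Setoid α) (c : Quotient p) : ℕ :=
  Nat.card (Quotient.mk p ⁻¹' {c})

theorem classCard_comap_subtype_val {p : Setoid α} {P : α → Prop}
    (hP : ∀ x y, p x y → P x → P y) (y : Subtype P) :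
    (p.comap ((↑) : Subtype P → α)).classCard ⟦y⟧ = p.classCard ⟦(y : α)⟧ :=
  Nat.card_congr
    { toFun z := ⟨z.1.1, Quotient.sound (Quotient.exact z.2 :)⟩
      invFun x := ⟨⟨x.1, hP _ _ (p.symm (Quotient.exact x.2)) y.2⟩,
        Quotient.sound (Quotient.exact x.2 : p x.1 y.1)⟩
      left_inv _ := rfl
      right_inv _ := rfl }

variable [Fintype α]

noncomputable def classSizes (p : Setoid α) : Multiset ℕ :=
  (univ : Finset (Quotient p)).val.map p.classCard

theorem classCard_pos (p : Setoid α) (c : Quotient p) : 0 < p.classCard c := by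
  obtain ⟨x, rfl⟩ := Quotient.exists_rep c
  have : Nonempty (Quotient.mk p ⁻¹' {⟦x⟧}) := ⟨⟨x, rfl⟩⟩
  exact Nat.card_pos

theorem sum_classCard (p : Setoid α) : ∑ c, p.classCard c = Fintype.card α := by
  rw [← Nat.card_eq_fintype_card, ← Nat.card_congr (Equiv.sigmaFiberEquiv (Quotient.mk p)),
    Nat.card_sigma]
  rfl

theorem card_classSizes (p : Setoid α) : Multiset.card p.classSizes = Nat.card (Quotient p) := by
  simp [classSizes, Nat.card_eq_fintype_card]

theorem sum_classSizes (p : Setoid α) : p.classSizes.sum = Fintype.card α := by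
  rw [classSizes, sum_map_val, sum_classCard]

theorem prod_map_classSizes {M : Type*} [CommMonoid M] (p : Setoid α) (g : ℕ → M) :
    (p.classSizes.map g).prod = ∏ c, g (p.classCard c) := by
  rw [classSizes, Multiset.map_map, prod_map_val]
  rfl

theorem zero_notMem_classSizes (p : Setoid α) : 0 ∉ p.classSizes := by
  simp only [classSizes, Multiset.mem_map, not_exists, not_and]
  exact fun c _ => (p.classCard_pos c).ne'

theorem card_quotient_le_s10 (p : Setoid α) : Nat.card (Quotient p) ≤ Fintype.card α := by
  rw [← Nat.card_eq_fintype_card]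
  exact Nat.card_le_card_of_surjective _ Quotient.mk_surjective

end Setoid

open scoped Classical in
theorem stirS2_eq_card (α : Type*) [Fintype α] (r : ℕ) :
    stirS2 (Fintype.card α) r = #{p : Setoid α | Nat.card (Quotient p) = r} := by
  rw [← Fintype.card_subtype, ← Nat.card_eq_fintype_card (α := {p : Setoid α // _}), stirS2]
  exact Nat.card_congr <| (Setoid.comapEquiv (Fintype.equivFin α)).subtypeEquiv fun q => by
    rw [Setoid.comapEquiv, Equiv.coe_fn_mk,
      Setoid.card_quotient_comap (Fintype.equivFin α).surjective]

theorem Tnum_one (n r : ℕ) : Tnum n 1 r = stirS2 n r := by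
  simp only [Tnum]
  simp only [mul_ite, mul_one, mul_zero, sum_ite_eq', mem_Icc, le_refl, true_and]
  split_ifs with h
  · rfl
  · exact (stirS2_eq_zero_of_lt (not_le.mp h)).symm

theorem Tnum_succ_eq_sum_Tnum_mul_stirS2 (k n r : ℕ) :
    Tnum n (k + 1) r = ∑ m ∈ Icc r n, Tnum n k m * stirS2 m r := by
  induction k generalizing n with
  | zero =>
    rw [zero_add, Tnum_one]
    simp only [Tnum, ite_mul, one_mul, zero_mul, sum_ite_eq, mem_Icc, le_refl, and_true]
    split_ifs with h
    · rfl
    · exact stirS2_eq_zero_of_lt (not_le.mp h)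
  | succ k ih =>
    rw [Tnum]
    simp only [ih, mul_sum]
    rw [sum_comm' (t' := Icc r n) (s' := fun m' => Icc m' n) (by intros; simp; omega)]
    refine sum_congr rfl fun m' _ => ?_
    rw [Tnum, sum_mul]
    exact sum_congr rfl fun m _ => by ring

namespace Setoid

open scoped Classical

variable {α : Type*}

/-- The setoid on `α` that is `f c` on each class `c` of `p`. -/
def glue (p : Setoid α) (f : ∀ c : Quotient p, Setoid (Quotient.mk p ⁻¹' {c})) : Setoid α :=
  ker fun x => (⟨⟦x⟧, Quotient.mk (f ⟦x⟧) ⟨x, rfl⟩⟩ : Σ c, Quotient (f c))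

section glue

variable {p : Setoid α} {f : ∀ c : Quotient p, Setoid (Quotient.mk p ⁻¹' {c})}

theorem glue_iff (x y : α) :
    p.glue f x y ↔ ∃ h : ⟦x⟧ = ⟦y⟧, f ⟦y⟧ ⟨x, h⟩ ⟨y, rfl⟩ := by
  have key (z : α) (c : Quotient p) (h : ⟦z⟧ = c) :
      (⟨⟦z⟧, Quotient.mk (f ⟦z⟧) ⟨z, rfl⟩⟩ : Σ c, Quotient (f c)) =
        ⟨c, Quotient.mk _ ⟨z, h⟩⟩ := by
    subst h
    rfl
  change (⟨_, _⟩ : Σ c, Quotient (f c)) = ⟨_, _⟩ ↔ _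
  constructor
  · intro hxy
    have hx : ⟦x⟧ = ⟦y⟧ := congrArg Sigma.fst hxy
    rw [key x _ hx, Sigma.mk.inj_iff, heq_iff_eq] at hxy
    exact ⟨hx, Quotient.exact hxy.2⟩
  · rintro ⟨hx, hxy⟩
    rw [key x _ hx, Quotient.sound hxy]

theorem glue_le : p.glue f ≤ p := fun x y h => Quotient.exact ((glue_iff x y).1 h).1

theorem comap_glue (c : Quotient p) :
    (p.glue f).comap ((↑) : Quotient.mk p ⁻¹' {c} → α) = f c := by
  ext ⟨x, hx⟩ ⟨y, rfl⟩
  rw [comap_rel, glue_iff]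
  exact ⟨fun ⟨_, h⟩ => h, fun h => ⟨hx, h⟩⟩

theorem glue_comap {q : Setoid α} (h : q ≤ p) : p.glue (fun _ => q.comap (↑)) = q := by
  ext x y
  rw [glue_iff]
  exact ⟨fun ⟨_, hxy⟩ => hxy, fun hxy => ⟨Quotient.sound (h hxy), hxy⟩⟩

end glue

def leEquivPi (p : Setoid α) :
    {q // q ≤ p} ≃ ∀ c : Quotient p, Setoid (Quotient.mk p ⁻¹' {c}) where
  toFun q _ := q.1.comap (↑)
  invFun f := ⟨p.glue f, glue_le⟩
  left_inv q := Subtype.ext (glue_comap q.2)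
  right_inv _ := funext comap_glue

variable [Fintype α]

theorem prod_classCard_of_le {M : Type*} [CommMonoid M] {p q : Setoid α} (h : q ≤ p)
    (g : ℕ → M) :
    ∏ d, g (q.classCard d) = ∏ c : Quotient p,
      ∏ d, g ((q.comap ((↑) : Quotient.mk p ⁻¹' {c} → α)).classCard d) := by
  rw [← (sigmaQuotientEquivOfLe h).prod_comp, Fintype.prod_sigma]
  refine prod_congr rfl fun c _ => prod_congr rfl fun d _ => ?_
  induction d using Quotient.ind with | _ y => ?_
  refine congrArg g (classCard_comap_subtype_val (fun x z hxz hx => ?_) y).symm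
  exact show ⟦z⟧ = c from (Quotient.sound (h hxz)).symm.trans hx

theorem sum_le_prod_classCard_eq_prod_sum {R : Type*} [CommSemiring R] (p : Setoid α)
    (g : ℕ → R) :
    ∑ q with q ≤ p, ∏ d, g (q.classCard d) =
      ∏ c : Quotient p, ∑ s : Setoid (Quotient.mk p ⁻¹' {c}), ∏ d, g (s.classCard d) := by
  rw [Fintype.prod_sum, sum_subtype (p := (· ≤ p)) _ fun q => by simp]
  exact Fintype.sum_equiv p.leEquivPi _ _ fun q => prod_classCard_of_le q.2 g

theorem card_filter_card_quotient_quotient (p : Setoid α) (r : ℕ) :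
    #{s : Setoid (Quotient p) | Nat.card (Quotient s) = r} =
      #{s : Setoid α | p ≤ s ∧ Nat.card (Quotient s) = r} := by
  refine card_bij (fun s _ => s.comap (Quotient.mk p)) (fun s hs => ?_)
    (fun _ _ _ _ h => comap_injective _ Quotient.mk_surjective h) (fun s hs => ?_)
  · simp only [mem_filter, mem_univ, true_and] at hs ⊢
    refine ⟨fun x y hxy => ?_, by rw [card_quotient_comap Quotient.mk_surjective, hs]⟩
    rw [comap_rel, Quotient.sound hxy]
  · simp only [mem_filter, mem_univ, true_and] at hs ⊢
    have hcomap : (correspondence p ⟨s, hs.1⟩).comap (Quotient.mk p) = s :=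
      congrArg Subtype.val ((correspondence p).symm_apply_apply ⟨s, hs.1⟩)
    refine ⟨correspondence p ⟨s, hs.1⟩, ?_, hcomap⟩
    rw [← card_quotient_comap Quotient.mk_surjective, hcomap, hs.2]

theorem sum_Icc_sum_mul_stirS2 (F : Setoid α → ℕ) (r : ℕ) :
    ∑ m ∈ Icc r (Fintype.card α), (∑ p : Setoid α with Nat.card (Quotient p) = m, F p) *
        stirS2 m r =
      ∑ s : Setoid α with Nat.card (Quotient s) = r, ∑ p with p ≤ s, F p := by
  calc _ = ∑ m ∈ range (Fintype.card α + 1),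
        (∑ p : Setoid α with Nat.card (Quotient p) = m, F p) * stirS2 m r := by
        refine sum_subset (fun m hm => ?_) fun m hm' hm => ?_
        · rw [mem_Icc] at hm
          rw [mem_range]
          omega
        · rw [mem_range] at hm'
          rw [mem_Icc] at hm
          rw [stirS2_eq_zero_of_lt (by omega), mul_zero]
    _ = ∑ p, F p * #{s : Setoid (Quotient p) | Nat.card (Quotient s) = r} := by
        rw [← sum_fiberwise_of_maps_to (g := fun p : Setoid α => Nat.card (Quotient p))
          (t := range _) fun p _ => mem_range.2 (Nat.lt_succ_of_le p.card_quotient_le_s10)]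
        refine sum_congr rfl fun m _ => ?_
        rw [sum_mul]
        refine sum_congr rfl fun p hp => ?_
        rw [← (mem_filter.1 hp).2, Nat.card_eq_fintype_card, stirS2_eq_card]
    _ = _ := by
        simp only [card_filter_card_quotient_quotient]
        simp only [card_eq_sum_ones, mul_sum, mul_one]
        exact sum_comm' fun p s => by simp [and_comm]

theorem sum_Icc_sum_filter_card_quotient {M : Type*} [AddCommMonoid M] [Nonempty α]
    (F : Setoid α → M) :
    ∑ r ∈ Icc 1 (Fintype.card α), ∑ p : Setoid α with Nat.card (Quotient p) = r, F p =
      ∑ p, F p := by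
  refine sum_fiberwise_of_maps_to (fun p _ => ?_) F
  have : Nonempty (Quotient p) := .map (Quotient.mk p) ‹_›
  have : 0 < Nat.card (Quotient p) := Nat.card_pos
  have := p.card_quotient_le_s10
  rw [mem_Icc]
  omega

end Setoid

noncomputable def rowSum (k m : ℕ) : ℕ := ∑ r ∈ Icc 1 m, Tnum m k r

theorem rowSum_zero {m : ℕ} (hm : 0 < m) : rowSum 0 m = 1 := by
  simp [rowSum, Tnum, sum_ite_eq, hm.ne']

universe u

open scoped Classical in
theorem Tnum_succ_eq_sum_prod_rowSum (k : ℕ) (α : Type u) [Fintype α] (r : ℕ) :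
    Tnum (Fintype.card α) (k + 1) r =
      ∑ p : Setoid α with Nat.card (Quotient p) = r, ∏ c, rowSum k (p.classCard c) := by
  induction k generalizing α r with
  | zero =>
    rw [Tnum_one, stirS2_eq_card, card_eq_sum_ones]
    exact sum_congr rfl fun p _ => (prod_eq_one fun c _ => rowSum_zero (p.classCard_pos c)).symm
  | succ k ih =>
    rw [Tnum_succ_eq_sum_Tnum_mul_stirS2]
    simp only [ih α]
    rw [Setoid.sum_Icc_sum_mul_stirS2]
    refine sum_congr rfl fun s _ => ?_
    rw [Setoid.sum_le_prod_classCard_eq_prod_sum]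
    refine prod_congr rfl fun c _ => ?_
    obtain ⟨x, rfl⟩ := Quotient.exists_rep c
    have : Nonempty (Quotient.mk s ⁻¹' {⟦x⟧}) := ⟨⟨x, rfl⟩⟩
    rw [← Setoid.sum_Icc_sum_filter_card_quotient, Setoid.classCard, Nat.card_eq_fintype_card,
      rowSum]
    exact sum_congr rfl fun r' _ => (ih _ r').symm

namespace Setoid

open scoped Classical

variable {α : Type*}

/-- The setoid with the class `B` whose restriction to the complement of `B` is `q`. -/
noncomputable def insertClass (B : Finset α) (q : Setoid {y // y ∉ B}) : Setoid α :=
  ker fun x => if h : x ∈ B then none else some (Quotient.mk q ⟨x, h⟩)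

theorem insertClass_iff_of_mem {B : Finset α} (q : Setoid {y // y ∉ B}) {x : α} (hx : x ∈ B)
    (y : α) : insertClass B q x y ↔ y ∈ B := by
  change (dite _ _ _) = (dite _ _ _) ↔ _
  by_cases hy : y ∈ B <;> simp [hx, hy]

theorem comap_insertClass (B : Finset α) (q : Setoid {y // y ∉ B}) :
    (insertClass B q).comap (↑) = q := by
  ext ⟨x, hx⟩ ⟨y, hy⟩
  change (dite _ _ _) = (dite _ _ _) ↔ _
  simp [hx, hy, Quotient.eq]

theorem insertClass_comap {p : Setoid α} {B : Finset α} {x : α} (hB : ∀ y, p x y ↔ y ∈ B) :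
    insertClass B (p.comap (↑)) = p := by
  ext y z
  change (dite _ _ _) = (dite _ _ _) ↔ _
  by_cases hy : y ∈ B <;> by_cases hz : z ∈ B
  · simpa [hy, hz] using p.trans (p.symm ((hB y).2 hy)) ((hB z).2 hz)
  · simpa [hy, hz] using fun h => hz ((hB z).1 (p.trans ((hB y).2 hy) h))
  · simpa [hy, hz] using fun h => hy ((hB y).1 (p.trans ((hB z).2 hz) (p.symm h)))
  · simp only [hy, hz, dite_false, Option.some_inj, Quotient.eq]
    rfl

variable [Fintype α]

noncomputable def classFinset (p : Setoid α) (c : Quotient p) : Finset α := {x | ⟦x⟧ = c}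

theorem card_classFinset (p : Setoid α) (c : Quotient p) :
    #(p.classFinset c) = p.classCard c := by
  rw [classCard, Nat.card_eq_fintype_card, ← Set.toFinset_card]
  congr 1
  ext
  simp [classFinset]

theorem classFinset_injective (p : Setoid α) : Function.Injective p.classFinset := by
  intro c d h
  obtain ⟨x, rfl⟩ := Quotient.exists_rep c
  have : x ∈ p.classFinset d := h ▸ by simp [classFinset]
  simpa [classFinset] using this

noncomputable def classFinsets (p : Setoid α) : Finset (Finset α) := univ.image p.classFinset

theorem count_classSizes (p : Setoid α) (a : ℕ) :
    p.classSizes.count a = #{B ∈ p.classFinsets | #B = a} := by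
  rw [classSizes, Multiset.count_map, classFinsets, filter_image,
    card_image_of_injective _ p.classFinset_injective]
  simp only [← filter_val, ← card_def, card_classFinset, eq_comm]

theorem mem_classFinsets_iff {p : Setoid α} {B : Finset α} {x : α} (hx : x ∈ B) :
    B ∈ p.classFinsets ↔ ∀ y, p x y ↔ y ∈ B := by
  simp only [classFinsets, mem_image, mem_univ, true_and]
  constructor
  · rintro ⟨c, rfl⟩ y
    simp only [classFinset, mem_filter, mem_univ, true_and] at hx ⊢
    rw [← hx, Quotient.eq]
    exact ⟨p.symm, p.symm⟩
  · intro hB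
    refine ⟨⟦x⟧, Finset.ext fun y => ?_⟩
    simp only [classFinset, mem_filter, mem_univ, true_and, Quotient.eq, ← hB]
    exact ⟨p.symm, p.symm⟩

theorem classSizes_eq_cons {p : Setoid α} {B : Finset α} {x : α}
    (hB : ∀ y, p x y ↔ y ∈ B) :
    p.classSizes = #B ::ₘ (p.comap ((↑) : {y // y ∉ B} → α)).classSizes := by
  set q := p.comap ((↑) : {y // y ∉ B} → α)
  let ι : Quotient q ↪ Quotient p :=
    ⟨Quotient.lift (fun y => ⟦y.1⟧) fun _ _ h => Quotient.sound h, by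
      rintro ⟨y⟩ ⟨z⟩ h
      exact Quotient.sound (Quotient.exact (s := p) h)⟩
  have hx : ⟦x⟧ ∉ univ.map ι := by
    simp only [mem_map, mem_univ, true_and, not_exists]
    rintro ⟨y⟩ h
    exact y.2 ((hB y).1 (p.symm (Quotient.exact h)))
  have huniv : (univ : Finset (Quotient p)) = cons ⟦x⟧ (univ.map ι) hx := by
    ext d
    obtain ⟨y, rfl⟩ := Quotient.exists_rep d
    simp only [mem_univ, mem_cons, mem_map, true_and, true_iff]
    by_cases hy : y ∈ B
    · exact Or.inl (Quotient.sound (p.symm ((hB y).2 hy)))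
    · exact Or.inr ⟨⟦⟨y, hy⟩⟧, rfl⟩
  rw [classSizes, huniv, cons_val, map_val, Multiset.map_cons, Multiset.map_map, classSizes]
  congr 1
  · rw [← card_classFinset]
    congr 1
    ext y
    simp only [classFinset, mem_filter, mem_univ, true_and, Quotient.eq, ← hB]
    exact ⟨p.symm, p.symm⟩
  · refine Multiset.map_congr rfl fun d _ => ?_
    induction d using Quotient.ind with | _ y => ?_
    refine (classCard_comap_subtype_val (fun y z hyz hy hz => hy ?_) y).symm
    exact (hB y).1 (p.trans ((hB z).2 hz) (p.symm hyz))

theorem card_filter_classSizes_cons_mem_classFinsets {B : Finset α} (hB : B.Nonempty)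
    (μ : Multiset ℕ) :
    #{p : Setoid α | p.classSizes = #B ::ₘ μ ∧ B ∈ p.classFinsets} =
      #{q : Setoid {y // y ∉ B} | q.classSizes = μ} := by
  obtain ⟨x, hx⟩ := hB
  refine card_bij (fun p _ => p.comap (↑)) (fun p hp => ?_) (fun p hp p' hp' h => ?_)
    (fun q hq => ?_)
  · simp only [mem_filter, mem_univ, true_and, mem_classFinsets_iff hx] at hp ⊢
    rw [classSizes_eq_cons hp.2, Multiset.cons_inj_right] at hp
    exact hp.1
  · simp only [mem_filter, mem_univ, true_and, mem_classFinsets_iff hx] at hp hp'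
    rw [← insertClass_comap hp.2, ← insertClass_comap hp'.2]
    exact congrArg _ h
  · simp only [mem_filter, mem_univ, true_and] at hq
    have hB := insertClass_iff_of_mem q hx
    refine ⟨insertClass B q, ?_, comap_insertClass B q⟩
    simp only [mem_filter, mem_univ, true_and, mem_classFinsets_iff hx]
    rw [classSizes_eq_cons hB, comap_insertClass, hq]
    exact ⟨rfl, hB⟩

/-- Double counting the pairs `(p, B)` of a setoid `p` with class sizes `a ::ₘ μ` and a class `B`
of `p` with `a` elements. -/
theorem card_filter_classSizes_cons_mul {a : ℕ} (ha : a ≠ 0) (μ : Multiset ℕ) :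
    #{p : Setoid α | p.classSizes = a ::ₘ μ} * (μ.count a + 1) =
      ∑ B ∈ powersetCard a (univ : Finset α),
        #{q : Setoid {y // y ∉ B} | q.classSizes = μ} := by
  calc _ = ∑ p : Setoid α with p.classSizes = a ::ₘ μ,
        #{B ∈ powersetCard a (univ : Finset α) | B ∈ p.classFinsets} := by
        rw [card_eq_sum_ones, sum_mul, one_mul]
        refine sum_congr rfl fun p hp => ?_
        have hcount := count_classSizes p a
        rw [(mem_filter.1 hp).2, Multiset.count_cons_self] at hcount
        rw [hcount]
        congr 1
        ext B
        simp [and_comm]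
    _ = ∑ B ∈ powersetCard a (univ : Finset α),
        #{p : Setoid α | p.classSizes = a ::ₘ μ ∧ B ∈ p.classFinsets} := by
        simp only [← filter_filter]
        exact sum_card_bipartiteAbove_eq_sum_card_bipartiteBelow
          (fun (p : Setoid α) (B : Finset α) => B ∈ p.classFinsets)
    _ = _ := sum_congr rfl fun B hB => by
        rw [mem_powersetCard_univ] at hB
        rw [← card_filter_classSizes_cons_mem_classFinsets
          (card_pos.1 (hB ▸ Nat.pos_of_ne_zero ha)), hB]

end Setoid

open scoped Nat

theorem prod_factorial_pow_count_cons {s : Finset ℕ} {a : ℕ} (ha : a ∈ s)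
    (μ : Multiset ℕ) :
    ∏ j ∈ s, j ! ^ (a ::ₘ μ).count j * ((a ::ₘ μ).count j)! =
      (∏ j ∈ s, j ! ^ μ.count j * (μ.count j)!) * (a ! * (μ.count a + 1)) := by
  have h (j : ℕ) : j ! ^ (a ::ₘ μ).count j * ((a ::ₘ μ).count j)! =
      (j ! ^ μ.count j * (μ.count j)!) * if j = a then a ! * (μ.count a + 1) else 1 := by
    rw [Multiset.count_cons]
    split_ifs with hj
    · subst hj
      rw [pow_succ, Nat.factorial_succ]
      ring
    · simp
  rw [prod_congr rfl fun j _ => h j, prod_mul_distrib, prod_ite_eq', if_pos ha]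

open scoped Classical in
theorem Setoid.card_filter_classSizes_mul_prod (μ : Multiset ℕ) (h0 : 0 ∉ μ) (α : Type u)
    [Fintype α] (hα : Fintype.card α = μ.sum) {s : Finset ℕ} (hs : μ.toFinset ⊆ s) :
    #{p : Setoid α | p.classSizes = μ} * ∏ j ∈ s, j ! ^ μ.count j * (μ.count j)! =
      (Fintype.card α)! := by
  induction μ using Multiset.induction_on generalizing α with
  | empty =>
    have : IsEmpty α := Fintype.card_eq_zero_iff.1 (by simpa using hα)
    have hp (p : Setoid α) : p.classSizes = 0 := by
      rw [← Multiset.card_eq_zero, card_classSizes]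
      simp
    have : Unique (Setoid α) := ⟨⟨⊥⟩, fun q => Setoid.ext fun x => isEmptyElim x⟩
    simp [filter_true_of_mem fun p _ => hp p]
  | cons a ν ih =>
    have ha : a ≠ 0 := fun h => h0 (h ▸ Multiset.mem_cons_self a ν)
    have hν : 0 ∉ ν := fun h => h0 (Multiset.mem_cons_of_mem h)
    have hνs : ν.toFinset ⊆ s := fun j hj => hs (by simp_all)
    have hcard (B : Finset α) (hB : #B = a) : Fintype.card {y // y ∉ B} = ν.sum := by
      rw [Fintype.card_subtype_compl, Fintype.card_coe, hB, hα, Multiset.sum_cons]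
      omega
    calc _ = #{p : Setoid α | p.classSizes = a ::ₘ ν} * (ν.count a + 1) *
            (∏ j ∈ s, j ! ^ ν.count j * (ν.count j)!) * a ! := by
          rw [prod_factorial_pow_count_cons (hs (by simp))]
          ring
      _ = ∑ B ∈ powersetCard a (univ : Finset α), (Fintype.card α - a)! * a ! := by
          rw [Setoid.card_filter_classSizes_cons_mul ha, sum_mul, sum_mul]
          refine sum_congr rfl fun B hB => ?_
          rw [mem_powersetCard_univ] at hB
          rw [ih hν _ (hcard B hB) hνs, hcard B hB, hα, Multiset.sum_cons,
            Nat.add_sub_cancel_left]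
      _ = (Fintype.card α)! := by
          rw [sum_const, card_powersetCard, card_univ, smul_eq_mul, ← mul_assoc, mul_right_comm]
          exact Nat.choose_mul_factorial_mul_factorial (by simp [hα])

theorem Setoid.card_filter_classSizes_eq_fPart (n : ℕ) (P : n.Partition) :
    (#{p : Setoid (Fin n) | p.classSizes = P.parts} : ℚ) = fPart n P := by
  have hs : P.parts.toFinset ⊆ range (n + 1) := fun j hj => by
    rw [Multiset.mem_toFinset] at hj
    rw [mem_range, Nat.lt_succ_iff, ← P.parts_sum]
    exact Multiset.le_sum_of_mem hj
  have h := card_filter_classSizes_mul_prod P.parts (fun h => (P.parts_pos h).ne rfl) (Fin n)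
    (by rw [Fintype.card_fin, P.parts_sum]) hs
  rw [Fintype.card_fin] at h
  rw [fPart, eq_div_iff (by positivity)]
  exact_mod_cast h

namespace Setoid

variable {α : Type*} [Fintype α]

noncomputable def classPartition (p : Setoid α) {n : ℕ} (hα : Fintype.card α = n) :
    n.Partition where
  parts := p.classSizes
  parts_pos hi := Nat.pos_of_ne_zero (ne_of_mem_of_not_mem hi p.zero_notMem_classSizes)
  parts_sum := p.sum_classSizes.trans hα

open scoped Classical in
theorem sum_filter_card_quotient_eq_sum_partition {M : Type*} [AddCommMonoid M] {n : ℕ}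
    (hα : Fintype.card α = n) (F : Multiset ℕ → M) (r : ℕ) :
    ∑ p : Setoid α with Nat.card (Quotient p) = r, F p.classSizes =
      ∑ P : n.Partition with Multiset.card P.parts = r,
        #{p : Setoid α | p.classSizes = P.parts} • F P.parts := by
  rw [← sum_fiberwise_of_maps_to (g := fun p => p.classPartition hα) fun p hp => ?_]
  · refine sum_congr rfl fun P hP => ?_
    rw [mem_filter] at hP
    have hfiber (p : Setoid α) :
        (Nat.card (Quotient p) = r ∧ p.classPartition hα = P) ↔ p.classSizes = P.parts :=
      ⟨fun h => congrArg Nat.Partition.parts h.2, fun h =>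
        ⟨by rw [← card_classSizes, h, hP.2], Nat.Partition.ext h⟩⟩
    rw [filter_filter, filter_congr fun p _ => hfiber p,
      sum_congr rfl fun p hp => by rw [(mem_filter.1 hp).2], sum_const]
  · simp only [mem_filter, mem_univ, true_and] at hp ⊢
    rw [← hp, ← card_classSizes]
    rfl

end Setoid

theorem T_recurrence_partitions_general (n r k : ℕ) (hk : 2 ≤ k) :
    (Tnum n k r : ℚ) =
      ∑ P ∈ Finset.univ.filter (fun P : Nat.Partition n => Multiset.card P.parts = r),
        fPart n P *
          (P.parts.map fun i =>
            ((∑ r' ∈ Finset.Icc 1 i, Tnum i (k - 1) r' : ℕ) : ℚ)).prod := by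
  obtain ⟨j, rfl⟩ : ∃ j, k = j + 1 := ⟨k - 1, by omega⟩
  have h := Tnum_succ_eq_sum_prod_rowSum j (Fin n) r
  rw [Fintype.card_fin] at h
  simp only [← Setoid.prod_map_classSizes] at h
  rw [h, Nat.cast_sum, Setoid.sum_filter_card_quotient_eq_sum_partition (Fintype.card_fin n)
    (fun μ => ((μ.map (rowSum j)).prod : ℚ))]
  refine sum_congr rfl fun P _ => ?_
  rw [nsmul_eq_mul, Setoid.card_filter_classSizes_eq_fPart, Nat.cast_multiset_prod,
    Multiset.map_map]
  rfl

/-- For `n, r ≥ 1` and `k ≥ 2`: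
`T(n,k,r) = ∑_{λ ⊢ n, l(λ) = r} f_λ ∏_{i=1}^{r} (∑_{r'=1}^{λ_i} T(λ_i, k-1, r'))`,
the sum being over integer partitions of `n` of length `r`. -/
theorem T_recurrence_partitions (n r k : ℕ) (hn : 1 ≤ n) (hr : 1 ≤ r) (hk : 2 ≤ k) :
    (Tnum n k r : ℚ) =
      ∑ P ∈ Finset.univ.filter (fun P : Nat.Partition n => Multiset.card P.parts = r),
        fPart n P *
          (P.parts.map fun i =>
            ((∑ r' ∈ Finset.Icc 1 i, Tnum i (k - 1) r' : ℕ) : ℚ)).prod :=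
  T_recurrence_partitions_general n r k hk
end
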